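/- arXiv:1505.03018 — 5 statements merged into one kernel-verified Lean document; each statement's English description precedes it below -/
import Mathlib

section
/- Let A ∈ ℤ^{m×d} with ker_ℤ(A) ∩ ℕ^d = {0}, and let (b_i) be a sequence in the affine semigroup ℕA generated by the columns of A such that ‖b_i‖_∞ ∈ O(i^r) for some r ∈ ℕ. Then there exists a polynomial q ∈ ℚ[t] with |{u ∈ ℕ^d : A u = b_i}| ≤ q(i) for all i ∈ ℕ. -/
/-!
Since `A` has no nonzero nonnegative integer kernel vector, `0` is not a convex combination of
the columns of `A`: by Carathéodory such a combination could be taken affinely independent, and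
then its weights are rational, so clearing denominators would give such a kernel vector. Hence,
by Hahn–Banach, a linear functional `f` separates `0` from the columns, `δ ≤ f aⱼ` with `δ > 0`.
Every `u` in the fiber of `b` then satisfies `δ uⱼ ≤ f b ≤ ‖f‖ ‖b‖∞`, so the fiber of `bᵢ` lies
in a box of side `O(iʳ)` and has `O(i^{rd})` points.
-/

open Finset Matrix

/-- A `ℚ`-linear retraction `ℝ → ℚ` turns the weights into rational weights with the same
barycenter, and affine independence forces the two families of weights to agree. -/
theorem AffineIndependent.weight_mem_range_ratCast {ι κ : Type*} [Fintype ι]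
    {z : ι → κ → ℝ} (hz : AffineIndependent ℝ z) (hzq : ∀ i k, z i k ∈ Set.range ((↑) : ℚ → ℝ))
    {x : κ → ℝ} (hxq : ∀ k, x k ∈ Set.range ((↑) : ℚ → ℝ))
    {w : ι → ℝ} (hw : ∑ i, w i = 1) (hwz : ∑ i, w i • z i = x) (i : ι) :
    w i ∈ Set.range ((↑) : ℚ → ℝ) := by
  obtain ⟨π, hπ⟩ := (Algebra.linearMap ℚ ℝ).exists_leftInverse_of_injective
    (LinearMap.ker_eq_bot.2 Rat.cast_injective)
  have hπ_fix : ∀ s ∈ Set.range ((↑) : ℚ → ℝ), (π s : ℝ) = s := by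
    rintro _ ⟨q, rfl⟩
    exact congrArg _ (LinearMap.congr_fun hπ q)
  have hπ_mul : ∀ r, ∀ s ∈ Set.range ((↑) : ℚ → ℝ), (π (r * s) : ℝ) = π r * s := by
    rintro r _ ⟨q, rfl⟩
    rw [mul_comm r, ← Rat.smul_def, map_smul, smul_eq_mul, Rat.cast_mul, mul_comm]
  refine ⟨π (w i), hz.eq_of_sum_eq_sum (w₁ := fun i => (π (w i) : ℝ)) ?_ ?_ i (mem_univ i)⟩
  · rw [← Rat.cast_sum, ← map_sum, hw, hπ_fix 1 ⟨1, Rat.cast_one⟩]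
  · rw [hwz]
    funext k
    rw [← hπ_fix _ (hxq k), ← hwz]
    simp only [Finset.sum_apply, Pi.smul_apply, smul_eq_mul, map_sum, Rat.cast_sum]
    exact sum_congr rfl fun i _ => (hπ_mul _ _ (hzq i k)).symm

theorem exists_pos_nat_mul_eq_intCast {ι : Type*} [Fintype ι] (v : ι → ℚ) :
    ∃ N : ℕ, 0 < N ∧ ∀ i, ∃ z : ℤ, (z : ℚ) = N * v i := by
  refine ⟨∏ i, (v i).den, prod_pos fun i _ => (v i).pos, fun i => ?_⟩
  obtain ⟨k, hk⟩ := dvd_prod_of_mem (fun i => (v i).den) (mem_univ i)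
  refine ⟨(v i).num * k, ?_⟩
  rw [hk, Nat.cast_mul, mul_comm ((v i).den : ℚ), mul_assoc, mul_comm _ (v i), Rat.mul_den_eq_num]
  push_cast
  ring

theorem Matrix.exists_nonneg_ne_zero_mulVec_eq_zero_of_submatrix {m n ι : Type*} [Fintype n]
    [Fintype ι] [Nonempty ι] (A : Matrix m n ℤ) (g : ι → n) {U : ι → ℤ} (hU : ∀ i, 0 < U i)
    (hAU : A.submatrix id g *ᵥ U = 0) :
    ∃ u : n → ℤ, (∀ j, 0 ≤ u j) ∧ u ≠ 0 ∧ A *ᵥ u = 0 := by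
  classical
  obtain ⟨i₀⟩ := ‹Nonempty ι›
  refine ⟨fun j => ∑ i with g i = j, U i, fun j => sum_nonneg fun i _ => (hU i).le,
    fun hu => ?_, ?_⟩
  · have hle : U i₀ ≤ ∑ i with g i = g i₀, U i :=
      single_le_sum (fun i _ => (hU i).le) (mem_filter.2 ⟨mem_univ _, rfl⟩)
    have hzero : ∑ i with g i = g i₀, U i = 0 := congrFun hu (g i₀)
    linarith [hU i₀]
  · funext k
    rw [← congrFun hAU k]
    simp only [mulVec, dotProduct, submatrix_apply, id, mul_sum]
    rw [← sum_fiberwise univ g (fun i => A k (g i) * U i)]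
    refine sum_congr rfl fun j _ => sum_congr rfl fun i hi => ?_
    rw [(mem_filter.1 hi).2]

theorem Matrix.exists_nonneg_ne_zero_mulVec_eq_zero_of_zero_mem_convexHull {m n : Type*}
    [Fintype n] (A : Matrix m n ℤ)
    (h0 : (0 : m → ℝ) ∈ convexHull ℝ (Set.range fun j k => (A k j : ℝ))) :
    ∃ u : n → ℤ, (∀ j, 0 ≤ u j) ∧ u ≠ 0 ∧ A *ᵥ u = 0 := by
  obtain ⟨ι, _, z, w, hzA, hz, hw0, hw1, hwz⟩ := eq_pos_convex_span_of_mem_convexHull h0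
  have : Nonempty ι := by
    by_contra h
    simp [not_nonempty_iff.1 h] at hw1
  choose g hg using fun i => hzA ⟨i, rfl⟩
  choose v hv using hz.weight_mem_range_ratCast
    (fun i k => ⟨A k (g i), by rw [← hg, Rat.cast_intCast]⟩) (fun _ => ⟨0, Rat.cast_zero⟩) hw1 hwz
  obtain ⟨N, hN, hNv⟩ := exists_pos_nat_mul_eq_intCast v
  choose U hU using hNv
  have hUw : ∀ i, (U i : ℝ) = N * w i := fun i => by rw [← hv i]; exact_mod_cast hU i
  refine A.exists_nonneg_ne_zero_mulVec_eq_zero_of_submatrix g (U := U) (fun i => ?_) ?_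
  · exact_mod_cast hUw i ▸ mul_pos (Nat.cast_pos.2 hN) (hw0 i)
  · funext k
    have hk : ((∑ i, A k (g i) * U i : ℤ) : ℝ) = N * ∑ i, w i * z i k := by
      push_cast
      rw [mul_sum]
      refine sum_congr rfl fun i _ => ?_
      rw [hUw, ← hg]
      ring
    have hwz_k : ∑ i, w i * z i k = 0 := by simpa using congrFun hwz k
    rw [hwz_k, mul_zero] at hk
    exact_mod_cast hk

theorem Matrix.exists_dual_pos_on_columns {m n : Type*} [Fintype n]
    (A : Matrix m n ℤ) (hker : ∀ u : n → ℤ, A *ᵥ u = 0 → (∀ j, 0 ≤ u j) → u = 0) :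
    ∃ (f : StrongDual ℝ (m → ℝ)) (δ : ℝ), 0 < δ ∧ ∀ j, δ ≤ f fun k => (A k j : ℝ) := by
  have h0 : (0 : m → ℝ) ∉ convexHull ℝ (Set.range fun j k => (A k j : ℝ)) := fun h0 => by
    obtain ⟨u, hu0, hu, hAu⟩ := A.exists_nonneg_ne_zero_mulVec_eq_zero_of_zero_mem_convexHull h0
    exact hu (hker u hAu hu0)
  obtain ⟨f, δ, hf0, hf⟩ := geometric_hahn_banach_point_closed (convex_convexHull ℝ _)
    ((Set.finite_range _).isCompact_convexHull (𝕜 := ℝ)).isClosed h0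
  exact ⟨f, δ, by simpa using hf0, fun j => (hf _ (subset_convexHull ℝ _ ⟨j, rfl⟩)).le⟩

/-- The fiber `𝓕_{A,b}`, with `ℕ^n` encoded as the nonnegative integer vectors. -/
def Matrix.fiber {m n : Type*} [Fintype n] (A : Matrix m n ℤ) (b : m → ℤ) : Set (n → ℤ) :=
  {u | (∀ j, 0 ≤ u j) ∧ A *ᵥ u = b}

theorem Matrix.exists_forall_fiber_le {m n : Type*} [Fintype m] [Fintype n]
    (A : Matrix m n ℤ) (hker : ∀ u : n → ℤ, A *ᵥ u = 0 → (∀ j, 0 ≤ u j) → u = 0) :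
    ∃ K : ℕ, ∀ (b : m → ℤ) (M : ℚ), 0 ≤ M → (∀ k, |(b k : ℚ)| ≤ M) →
      ∀ u ∈ A.fiber b, ∀ j, (u j : ℚ) ≤ K * M := by
  obtain ⟨f, δ, hδ, hf⟩ := A.exists_dual_pos_on_columns hker
  refine ⟨⌈‖f‖ / δ⌉₊, fun b M hM hbM u ⟨hu0, hAu⟩ j => ?_⟩
  have hcols : f (fun k => (b k : ℝ)) = ∑ j, (u j : ℝ) * f fun k => (A k j : ℝ) := by
    have : (fun k => ((A *ᵥ u) k : ℝ)) = ∑ j, (u j : ℝ) • fun k => (A k j : ℝ) := by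
      funext k
      simp [mulVec, dotProduct, mul_comm]
    simp only [← hAu, this, map_sum, map_smul, smul_eq_mul]
  have hb : f (fun k => (b k : ℝ)) ≤ ‖f‖ * M := by
    refine (le_abs_self _).trans ((f.le_opNorm _).trans ?_)
    gcongr
    refine (pi_norm_le_iff_of_nonneg (by positivity)).2 fun k => ?_
    rw [Real.norm_eq_abs]
    exact_mod_cast hbM k
  have hu : (u j : ℝ) * δ ≤ f (fun k => (b k : ℝ)) := by
    rw [hcols]
    calc (u j : ℝ) * δ ≤ (u j : ℝ) * f (fun k => (A k j : ℝ)) := by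
          gcongr
          · exact_mod_cast hu0 j
          · exact hf j
      _ ≤ _ := single_le_sum (f := fun j => (u j : ℝ) * f fun k => (A k j : ℝ))
          (fun j _ => mul_nonneg (by exact_mod_cast hu0 j) (hδ.le.trans (hf j))) (mem_univ j)
  have : (u j : ℝ) ≤ ⌈‖f‖ / δ⌉₊ * M := by
    calc (u j : ℝ) ≤ ‖f‖ / δ * M := by
          rw [div_mul_eq_mul_div, le_div_iff₀ hδ]
          exact hu.trans hb
      _ ≤ _ := by gcongr; exact Nat.le_ceil _
  exact_mod_cast this

theorem Set.ncard_le_of_forall_mem_Icc {ι : Type*} [Fintype ι] {S : Set (ι → ℤ)} {B : ℚ}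
    (hB : 0 ≤ B) (hS : ∀ u ∈ S, ∀ j, 0 ≤ u j ∧ (u j : ℚ) ≤ B) :
    (S.ncard : ℚ) ≤ (B + 1) ^ Fintype.card ι := by
  classical
  have hsub : S ⊆ ↑(Fintype.piFinset fun _ : ι => Finset.Icc (0 : ℤ) ⌊B⌋₊) := fun u hu => by
    simp only [Fintype.coe_piFinset, Set.mem_pi, Set.mem_univ, coe_Icc, Set.mem_Icc, forall_const]
    refine fun j => ⟨(hS u hu j).1, ?_⟩
    have hle : ((u j).toNat : ℚ) ≤ B := by
      rw [← Int.cast_natCast, Int.toNat_of_nonneg (hS u hu j).1]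
      exact (hS u hu j).2
    have := Nat.le_floor hle
    omega
  calc (S.ncard : ℚ) ≤ (⌊B⌋₊ + 1 : ℕ) ^ Fintype.card ι := by
        have := Set.ncard_le_ncard hsub (Finset.finite_toSet _)
        rw [Set.ncard_coe_finset, Fintype.card_piFinset, prod_const, card_univ,
          Int.card_Icc] at this
        exact_mod_cast this.trans (by simp)
    _ ≤ (B + 1) ^ Fintype.card ι := by
        gcongr
        push_cast
        linarith [Nat.floor_le hB]

theorem Matrix.exists_ncard_fiber_le {m n : Type*} [Fintype m] [Fintype n]
    (A : Matrix m n ℤ) (hker : ∀ u : n → ℤ, A *ᵥ u = 0 → (∀ j, 0 ≤ u j) → u = 0) :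
    ∃ K : ℕ, ∀ (b : m → ℤ) (M : ℚ), 0 ≤ M → (∀ k, |(b k : ℚ)| ≤ M) →
      ((A.fiber b).ncard : ℚ) ≤ (K * M + 1) ^ Fintype.card n := by
  obtain ⟨K, hK⟩ := A.exists_forall_fiber_le hker
  exact ⟨K, fun b M hM hbM => Set.ncard_le_of_forall_mem_Icc (by positivity)
    fun u hu j => ⟨hu.1 j, hK b M hM hbM u hu j⟩⟩

open Polynomial in
theorem Polynomial.exists_forall_le_eval_of_le_eval {f : ℕ → ℚ} (p : ℚ[X]) (i₀ : ℕ)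
    (hf : ∀ i, i₀ ≤ i → f i ≤ p.eval (i : ℚ)) : ∃ q : ℚ[X], ∀ i, f i ≤ q.eval (i : ℚ) := by
  refine ⟨p + C (∑ i ∈ range i₀, |f i - p.eval (i : ℚ)|), fun i => ?_⟩
  have hsum : 0 ≤ ∑ i ∈ range i₀, |f i - p.eval (i : ℚ)| := sum_nonneg fun _ _ => abs_nonneg _
  rw [eval_add, eval_C]
  rcases le_or_gt i₀ i with hi | hi
  · linarith [hf i hi]
  · have := single_le_sum (f := fun i => |f i - p.eval (i : ℚ)|) (fun _ _ => abs_nonneg _)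
      (mem_range.2 hi)
    linarith [le_abs_self (f i - p.eval (i : ℚ))]

theorem stmt2_general (m d : ℕ) (A : Matrix (Fin m) (Fin d) ℤ)
    (hker : ∀ u : Fin d → ℤ, A.mulVec u = 0 → (∀ j, 0 ≤ u j) → u = 0)
    (b : ℕ → Fin m → ℤ)
    (r : ℕ) (C : ℚ) (i0 : ℕ)
    (hO : ∀ i : ℕ, i0 ≤ i → ∀ j, (|b i j| : ℚ) ≤ C * (i : ℚ) ^ r) :
    ∃ q : Polynomial ℚ, ∀ i : ℕ,
      ((Set.ncard {u : Fin d → ℤ | (∀ j, 0 ≤ u j) ∧ A.mulVec u = b i} : ℚ))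
        ≤ q.eval (i : ℚ) := by
  obtain ⟨K, hK⟩ := A.exists_ncard_fiber_le hker
  refine Polynomial.exists_forall_le_eval_of_le_eval
    ((Polynomial.C (K * |C|) * Polynomial.X ^ r + 1) ^ d) i0 fun i hi => ?_
  have hM : ∀ j, (|b i j| : ℚ) ≤ |C| * (i : ℚ) ^ r := fun j =>
    (hO i hi j).trans (by gcongr; exact le_abs_self C)
  calc _ ≤ ((K : ℚ) * (|C| * (i : ℚ) ^ r) + 1) ^ d := by
        have := hK (b i) _ (by positivity) hM
        rwa [Fintype.card_fin] at this
    _ = _ := by simp [mul_assoc]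

/-- If `ker_ℤ(A) ∩ ℕ^d = {0}` and `(b_i)` is a sequence in `ℕA` with `‖b_i‖_∞ ∈ O(i^r)`,
then the fiber sizes `|𝓕_{A,b_i}|` are bounded by a polynomial in `i`
(a meaningful parametrization). -/
theorem stmt2 (m d : ℕ) (A : Matrix (Fin m) (Fin d) ℤ)
    (hker : ∀ u : Fin d → ℤ, A.mulVec u = 0 → (∀ j, 0 ≤ u j) → u = 0)
    (b : ℕ → Fin m → ℤ)
    (hb : ∀ i, ∃ u : Fin d → ℤ, (∀ j, 0 ≤ u j) ∧ A.mulVec u = b i)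
    (r : ℕ) (C : ℚ) (i0 : ℕ)
    (hO : ∀ i : ℕ, i0 ≤ i → ∀ j, (|b i j| : ℚ) ≤ C * (i : ℚ) ^ r) :
    ∃ q : Polynomial ℚ, ∀ i : ℕ,
      ((Set.ncard {u : Fin d → ℤ | (∀ j, 0 ≤ u j) ∧ A.mulVec u = b i} : ℚ))
        ≤ q.eval (i : ℚ) :=
  stmt2_general m d A hker b r C i0 hO
end

section
/- Let A ∈ ℤ^{m×d}, b ∈ ℕA, 𝓜 ⊂ ker_ℤ(A) finite, and u ∈ ℕ^d. Define the u-boundary ∂_𝓜^u(𝓕_{A,b}) := { v ∈ u + 𝓕_{A,b} : ∃ m ∈ ±𝓜, v + m ∈ ℕ^d \ (u + 𝓕_{A,b}) }. Then ∂_𝓜^u(𝓕_{A,b}) ⊆ u + ⋃_{j ∈ supp(u)} ⋃_{r=0}^{𝒞(𝓜)} { w ∈ 𝓕_{A,b} : w_j = r }, where 𝒞(𝓜) = max_{m ∈ 𝓜} ‖m‖_∞ is the complexity of 𝓜 and supp(u) = { j : u_j ≠ 0 }. -/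
/-- The `u`-boundary of the fiber `𝓕_{A,b}` is contained in
`u + ⋃_{j ∈ supp(u)} ⋃_{r=0}^{𝒞(𝓜)} {w ∈ 𝓕_{A,b} : w_j = r}`. -/
theorem stmt4 (m d : ℕ) (A : Matrix (Fin m) (Fin d) ℤ)
    (b : Fin m → ℤ) (M : Finset (Fin d → ℤ))
    (hM : ∀ v ∈ M, A.mulVec v = 0)
    (u : Fin d → ℤ) (hu : ∀ j, 0 ≤ u j)
    (F : Set (Fin d → ℤ))
    (hF : F = {w | (∀ j, 0 ≤ w j) ∧ A.mulVec w = b})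
    (C : ℕ) (hC : C = M.sup (fun v => Finset.univ.sup (fun j => (v j).natAbs)))
    (v : Fin d → ℤ)
    (hv : ∃ w ∈ F, v = u + w)
    (hbd : ∃ mv : Fin d → ℤ, (mv ∈ M ∨ -mv ∈ M) ∧ (∀ j, 0 ≤ v j + mv j) ∧
      ¬ ∃ w' ∈ F, v + mv = u + w') :
    ∃ w ∈ F, v = u + w ∧ ∃ j : Fin d, u j ≠ 0 ∧ ∃ r : ℕ, r ≤ C ∧ w j = (r : ℤ) := by
  obtain ⟨w, hwF, hvw⟩ := hv
  obtain ⟨mv, hmvM, hnn, hnot⟩ := hbd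
  refine ⟨w, hwF, hvw, ?_⟩
  rw [hF] at hwF
  obtain ⟨hwnn, hwb⟩ := hwF
  -- A.mulVec mv = 0
  have hA0 : A.mulVec mv = 0 := by
    rcases hmvM with h | h
    · exact hM mv h
    · have := hM _ h
      have : A.mulVec (-(-mv)) = -(A.mulVec (-mv)) := by
        simp [Matrix.mulVec_neg]
      simpa [this, hM _ h] using this
  -- there is j with w j + mv j < 0
  have hex : ∃ j, w j + mv j < 0 := by
    by_contra hno
    push_neg at hno
    apply hnot
    refine ⟨w + mv, ?_, ?_⟩
    · rw [hF]
      constructor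
      · intro j; have := hno j; simpa using by linarith
      · simp [Matrix.mulVec_add, hwb, hA0]
    · rw [hvw]; funext j; simp; ring
  obtain ⟨j, hj⟩ := hex
  have hvj := hnn j
  have hvwj : v j = u j + w j := by rw [hvw]; simp
  have huj : 0 < u j := by
    have : 0 ≤ u j + w j + mv j := by rw [← hvwj]; exact hvj
    linarith
  -- bound on mv j
  have hbound : (mv j).natAbs ≤ C := by
    rw [hC]
    rcases hmvM with h | h
    · exact le_trans (Finset.le_sup (f := fun j => (mv j).natAbs) (Finset.mem_univ j))
        (Finset.le_sup (f := fun v => Finset.univ.sup fun j => (v j).natAbs) h)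
    · have : (mv j).natAbs = ((-mv) j).natAbs := by simp
      rw [this]
      exact le_trans (Finset.le_sup (f := fun j => ((-mv) j).natAbs) (Finset.mem_univ j))
        (Finset.le_sup (f := fun v => Finset.univ.sup fun j => (v j).natAbs) h)
  have hwjC : w j ≤ (C : ℤ) := by
    have h1 : w j < -mv j := by linarith
    have h2 : -mv j ≤ ((mv j).natAbs : ℤ) := by
      have := Int.le_natAbs (a := -(mv j))
      simpa using this
    have h3 : ((mv j).natAbs : ℤ) ≤ (C : ℤ) := by exact_mod_cast hbound
    linarith
  refine ⟨j, ne_of_gt huj, (w j).toNat, ?_, ?_⟩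
  · exact Int.toNat_le.mpr hwjC
  · exact (Int.toNat_of_nonneg (hwnn j)).symm
end

section
/- Let G=(V,E) be a connected d-regular graph (possibly with loops), and let G' be obtained from G by deleting all loops. Let λ and λ' denote the second largest eigenvalue moduli of the simple-walk transition matrices of G and G' respectively. Then 1 − λ' ≤ d · (1 − λ). -/
/-!
Write `D = d - diag A ≥ 1` for the loopless degrees, `A' = A - diag A`, and `P = A / d`,
`P' = D⁻¹ A'` for the two walks. `P'` is similar to the symmetric matrix
`N = D^{-1/2} A' D^{-1/2}`, and by connectivity the `1`-eigenspace of `N` is spanned by `√D`.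
Deleting loops does not change the Laplacian `dI - A` and can only decrease the signless
Laplacian `dI + A`.

Let `x` be an eigenvector of `P` for an eigenvalue `μ ≠ 1`, so `x ⊥ 1`. If `μ ≥ 0`, shift `x` by a
constant `c` so that `u = √D (x - c)` is orthogonal to `√D`; the Rayleigh quotient of `N` at `u`
is at least some eigenvalue `θ ≠ 1` of `P'`, and
`(1 - θ) ‖u‖² ≤ ⟪x - c, (dI - A)(x - c)⟫ = d (1 - μ) ‖x‖² ≤ d (1 - μ) ‖u‖²`
because `D ≥ 1` and `x ⊥ 1`. If `μ < 0`, the same argument with `u = √D x`, the smallest Rayleigh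
quotient and the signless Laplacian gives an eigenvalue `θ` of `P'` with `1 + θ ≤ d (1 + μ)`.
Either way `1 - λ' ≤ d (1 - |μ|)`.
-/

open Matrix Finset

variable {ι : Type*}

section Sums

variable [Fintype ι]

theorem exists_ne_zero_sum_mul_le (f w : ι → ℝ) (hw : ∀ i, 0 ≤ w i) (hw0 : w ≠ 0) :
    ∃ i, w i ≠ 0 ∧ ∑ j, f j * w j ≤ f i * ∑ j, w j := by
  have hsupp : (univ.filter fun i => w i ≠ 0).Nonempty := by
    obtain ⟨i, hi⟩ := Function.ne_iff.mp hw0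
    exact ⟨i, by simpa using hi⟩
  obtain ⟨i, hi, hmax⟩ := exists_max_image _ f hsupp
  refine ⟨i, (mem_filter.mp hi).2, ?_⟩
  calc ∑ j, f j * w j = ∑ j ∈ univ.filter fun j => w j ≠ 0, f j * w j := by
        rw [sum_filter_of_ne fun j _ h => right_ne_zero_of_mul h]
    _ ≤ ∑ j ∈ univ.filter fun j => w j ≠ 0, f i * w j :=
        sum_le_sum fun j hj => mul_le_mul_of_nonneg_right (hmax j hj) (hw j)
    _ = f i * ∑ j, w j := by
        rw [← mul_sum, sum_filter_ne_zero]

theorem exists_mul_sum_le (f w : ι → ℝ) (hw : ∀ i, 0 ≤ w i) (hw0 : w ≠ 0) :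
    ∃ i, f i * ∑ j, w j ≤ ∑ j, f j * w j := by
  obtain ⟨i, -, hle⟩ := exists_ne_zero_sum_mul_le (-f) w hw hw0
  refine ⟨i, ?_⟩
  simp only [Pi.neg_apply, neg_mul, sum_neg_distrib] at hle
  linarith

theorem dotProduct_self_le_sub_const {x : ι → ℝ} (hx : ∑ i, x i = 0) (c : ℝ) :
    x ⬝ᵥ x ≤ (x - c • 1) ⬝ᵥ (x - c • 1) := by
  have hexp : (x - c • 1) ⬝ᵥ (x - c • 1) = x ⬝ᵥ x + ∑ i, (c ^ 2 - 2 * c * x i) := by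
    simp only [dotProduct, ← sum_add_distrib, Pi.sub_apply, Pi.smul_apply, Pi.one_apply,
      smul_eq_mul, mul_one]
    exact sum_congr rfl fun i _ => by ring
  have hshift : 0 ≤ ∑ i, (c ^ 2 - 2 * c * x i) := by
    rw [sum_sub_distrib, ← mul_sum, hx]
    simp only [sum_const, mul_zero, sub_zero]
    positivity
  linarith

end Sums

namespace Matrix

section

variable [DecidableEq ι] {A : Matrix ι ι ℝ}

theorem sub_diagonal_diag_apply (i j : ι) :
    (A - diagonal A.diag) i j = if i = j then 0 else A i j := by
  by_cases h : i = j <;> simp [h]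

theorem sub_diagonal_diag_nonneg (hA0 : ∀ i j, 0 ≤ A i j) (i j : ι) :
    0 ≤ (A - diagonal A.diag) i j := by
  rw [sub_diagonal_diag_apply]
  split_ifs
  exacts [le_rfl, hA0 i j]

end

variable [Fintype ι]

section RandomWalk

variable (W : Matrix ι ι ℝ)

noncomputable def randomWalk : Matrix ι ι ℝ := of fun i j => W i j / (W *ᵥ 1) i

noncomputable def sqrtDegree : ι → ℝ := fun i => √((W *ᵥ 1) i)

noncomputable def normalizedAdj : Matrix ι ι ℝ :=
  of fun i j => W i j / (sqrtDegree W i * sqrtDegree W j)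

variable {W}

theorem randomWalk_mulVec (z : ι → ℝ) :
    randomWalk W *ᵥ z = fun i => (W *ᵥ z) i / (W *ᵥ 1) i := by
  ext i
  simp only [randomWalk, mulVec, dotProduct, of_apply, sum_div]
  exact sum_congr rfl fun j _ => div_mul_eq_mul_div ..

theorem sqrtDegree_pos (hdeg : ∀ i, 0 < (W *ᵥ 1) i) (i : ι) : 0 < sqrtDegree W i :=
  Real.sqrt_pos.mpr (hdeg i)

theorem sqrtDegree_mul_self (hdeg : ∀ i, 0 < (W *ᵥ 1) i) (i : ι) :
    sqrtDegree W i * sqrtDegree W i = (W *ᵥ 1) i :=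
  Real.mul_self_sqrt (hdeg i).le

theorem normalizedAdj_mulVec (hdeg : ∀ i, 0 < (W *ᵥ 1) i) (z : ι → ℝ) :
    normalizedAdj W *ᵥ (sqrtDegree W * z) = fun i => (W *ᵥ z) i / sqrtDegree W i := by
  ext i
  simp only [normalizedAdj, mulVec, dotProduct, of_apply, Pi.mul_apply, sum_div]
  refine sum_congr rfl fun j _ => ?_
  have := (sqrtDegree_pos hdeg j).ne'
  field_simp

theorem randomWalk_mulVec_div_sqrtDegree (hdeg : ∀ i, 0 < (W *ᵥ 1) i) {θ : ℝ} {v : ι → ℝ}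
    (hv : normalizedAdj W *ᵥ v = θ • v) :
    randomWalk W *ᵥ (v / sqrtDegree W) = θ • (v / sqrtDegree W) := by
  have hs i := (sqrtDegree_pos hdeg i).ne'
  rw [show v = sqrtDegree W * (v / sqrtDegree W) by ext i; simp [mul_div_cancel₀ _ (hs i)],
    normalizedAdj_mulVec hdeg] at hv
  ext i
  have hvi := congrFun hv i
  simp only [randomWalk_mulVec, Pi.smul_apply, Pi.mul_apply, Pi.div_apply, smul_eq_mul] at hvi ⊢
  rw [← sqrtDegree_mul_self hdeg i]
  have := hs i
  field_simp at hvi ⊢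
  linarith

theorem sqrtDegree_mul_dotProduct_self (hdeg : ∀ i, 0 < (W *ᵥ 1) i) (z : ι → ℝ) :
    (sqrtDegree W * z) ⬝ᵥ (sqrtDegree W * z) = ∑ i, (W *ᵥ 1) i * z i ^ 2 := by
  simp only [dotProduct, Pi.mul_apply]
  refine sum_congr rfl fun i _ => ?_
  rw [← sqrtDegree_mul_self hdeg i]
  ring

theorem sqrtDegree_mul_dotProduct_normalizedAdj (hdeg : ∀ i, 0 < (W *ᵥ 1) i) (z : ι → ℝ) :
    (sqrtDegree W * z) ⬝ᵥ normalizedAdj W *ᵥ (sqrtDegree W * z) = z ⬝ᵥ W *ᵥ z := by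
  rw [normalizedAdj_mulVec hdeg]
  simp only [dotProduct, Pi.mul_apply]
  refine sum_congr rfl fun i _ => ?_
  have := (sqrtDegree_pos hdeg i).ne'
  field_simp

theorem dotProduct_self_le_sqrtDegree_mul (hdeg : ∀ i, 1 ≤ (W *ᵥ 1) i) (z : ι → ℝ) :
    z ⬝ᵥ z ≤ (sqrtDegree W * z) ⬝ᵥ (sqrtDegree W * z) := by
  rw [sqrtDegree_mul_dotProduct_self fun i => one_pos.trans_le (hdeg i)]
  exact sum_le_sum fun i _ => by nlinarith [hdeg i, sq_nonneg (z i)]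

theorem exists_dotProduct_sqrtDegree_mul_sub_const_eq_zero [Nonempty ι]
    (hdeg : ∀ i, 0 < (W *ᵥ 1) i) (x : ι → ℝ) :
    ∃ c : ℝ, sqrtDegree W ⬝ᵥ (sqrtDegree W * (x - c • 1)) = 0 := by
  have hpos : 0 < ∑ i, (W *ᵥ 1) i := sum_pos (fun i _ => hdeg i) univ_nonempty
  have hdot (c : ℝ) : sqrtDegree W ⬝ᵥ (sqrtDegree W * (x - c • 1)) =
      ∑ i, (W *ᵥ 1) i * x i - c * ∑ i, (W *ᵥ 1) i := by
    simp only [dotProduct, Pi.mul_apply, Pi.sub_apply, Pi.smul_apply, Pi.one_apply, smul_eq_mul,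
      mul_one, mul_sum, ← sum_sub_distrib]
    refine sum_congr rfl fun i _ => ?_
    rw [← sqrtDegree_mul_self hdeg i]
    ring
  refine ⟨(∑ i, (W *ᵥ 1) i * x i) / ∑ i, (W *ᵥ 1) i, ?_⟩
  rw [hdot, div_mul_cancel₀ _ hpos.ne', sub_self]

theorem isHermitian_normalizedAdj (hW : W.IsSymm) : (normalizedAdj W).IsHermitian := by
  refine isHermitian_iff_isSymm.mpr (IsSymm.ext fun i j => ?_)
  simp only [normalizedAdj, of_apply, hW.apply, mul_comm]

end RandomWalk

section Regular

variable {A : Matrix ι ι ℝ} {d : ℝ}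

theorem mulVec_eq_smul_of_randomWalk_mulVec_eq_smul (hrow : ∀ i, (A *ᵥ 1) i = d) (hd : d ≠ 0)
    {x : ι → ℝ} {μ : ℝ} (hx : randomWalk A *ᵥ x = μ • x) : A *ᵥ x = (d * μ) • x := by
  ext i
  have := congrFun hx i
  simp only [randomWalk_mulVec, hrow, Pi.smul_apply, smul_eq_mul] at this ⊢
  field_simp at this
  linarith

theorem sum_eq_zero_of_randomWalk_mulVec_eq_smul (hA : A.IsSymm) (hrow : ∀ i, (A *ᵥ 1) i = d)
    (hd : d ≠ 0) {x : ι → ℝ} {μ : ℝ} (hx : randomWalk A *ᵥ x = μ • x) (hμ : μ ≠ 1) :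
    ∑ i, x i = 0 := by
  have h := congrArg ((1 : ι → ℝ) ⬝ᵥ ·) (mulVec_eq_smul_of_randomWalk_mulVec_eq_smul hrow hd hx)
  simp only [dotProduct_mulVec, ← mulVec_transpose, hA.eq, dotProduct_smul, one_dotProduct,
    show A *ᵥ 1 = d • 1 from funext fun i => by simp [hrow], smul_dotProduct, smul_eq_mul] at h
  have : d * (1 - μ) * ∑ i, x i = 0 := by linarith
  simpa [hd, sub_eq_zero, Ne.symm hμ] using this

end Regular

variable [DecidableEq ι]

theorem mem_spectrum_of_mulVec_eq_smul {M : Matrix ι ι ℝ} {μ : ℝ} {v : ι → ℝ} (hv : v ≠ 0)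
    (h : M *ᵥ v = μ • v) : μ ∈ spectrum ℝ M := by
  rw [← spectrum_toLin']
  exact Module.End.hasEigenvalue_of_hasEigenvector
    ⟨Module.End.mem_eigenspace_iff.mpr (by simpa using h), hv⟩ |>.mem_spectrum

theorem exists_mulVec_eq_smul_of_mem_spectrum {M : Matrix ι ι ℝ} {μ : ℝ}
    (h : μ ∈ spectrum ℝ M) : ∃ v ≠ 0, M *ᵥ v = μ • v := by
  rw [← spectrum_toLin', ← Module.End.hasEigenvalue_iff_mem_spectrum] at h
  obtain ⟨v, hv, hv0⟩ := h.exists_hasEigenvector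
  exact ⟨v, hv0, by simpa using Module.End.mem_eigenspace_iff.mp hv⟩

section Stochastic

variable {M : Matrix ι ι ℝ}

theorem abs_le_one_of_mem_spectrum (hM : M ∈ rowStochastic ℝ ι) {μ : ℝ}
    (hμ : μ ∈ spectrum ℝ M) : |μ| ≤ 1 := by
  rw [← spectrum_toLin', ← Module.End.hasEigenvalue_iff_mem_spectrum] at hμ
  obtain ⟨k, hk⟩ := eigenvalue_mem_ball hμ
  have hoff : ∑ j ∈ univ.erase k, ‖M k j‖ = 1 - M k k := by
    rw [← sum_row_of_mem_rowStochastic hM k, ← add_sum_erase _ _ (mem_univ k)]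
    simp [Real.norm_of_nonneg (hM.1 _ _)]
  rw [Metric.mem_closedBall, Real.dist_eq, hoff] at hk
  have := hM.1 k k
  obtain ⟨hlo, hhi⟩ := abs_le.mp hk
  exact abs_le.mpr ⟨by linarith, by linarith⟩

theorem eq_of_mulVec_eq_self (hM : M ∈ rowStochastic ℝ ι)
    (hconn : ∀ i j, Relation.ReflTransGen (fun a b => 0 < M a b) i j) {y : ι → ℝ}
    (hy : M *ᵥ y = y) (i j : ι) : y i = y j := by
  obtain ⟨m, -, hmax⟩ := exists_max_image univ y ⟨i, mem_univ i⟩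
  -- a weighted average of values `≤ y m` equals `y m` only if every value it weighs is `y m`
  have step {a b : ι} (ha : y a = y m) (hab : 0 < M a b) : y b = y m := by
    have hsum : ∑ k, M a k * (y m - y k) = 0 := by
      simp only [mul_sub, sum_sub_distrib, ← sum_mul, sum_row_of_mem_rowStochastic hM, one_mul]
      rw [← ha]
      simpa [mulVec, dotProduct, sub_eq_zero] using (congrFun hy a).symm
    have := (sum_eq_zero_iff_of_nonneg fun k _ =>
      mul_nonneg (hM.1 a k) (sub_nonneg.mpr (hmax k (mem_univ k)))).mp hsum b (mem_univ b)
    linarith [(mul_eq_zero.mp this).resolve_left hab.ne']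
  have hconst (k : ι) : y k = y m := by
    induction hconn m k with
    | refl => rfl
    | tail _ hab ih => exact step ih hab
  rw [hconst i, hconst j]

noncomputable def slem (M : Matrix ι ι ℝ) : ℝ :=
  sSup {x : ℝ | ∃ μ ∈ spectrum ℝ M, μ ≠ 1 ∧ x = |μ|}

theorem slem_nonneg : 0 ≤ slem M :=
  Real.sSup_nonneg fun _ ⟨μ, _, _, hx⟩ => hx ▸ abs_nonneg μ

theorem abs_le_slem (hM : M ∈ rowStochastic ℝ ι) {μ : ℝ} (hμ : μ ∈ spectrum ℝ M) (hμ1 : μ ≠ 1) :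
    |μ| ≤ slem M :=
  le_csSup ⟨1, fun _ ⟨_, hν, _, hx⟩ => hx ▸ abs_le_one_of_mem_spectrum hM hν⟩ ⟨μ, hμ, hμ1, rfl⟩

theorem slem_le {c : ℝ} (hc : 0 ≤ c) (h : ∀ μ ∈ spectrum ℝ M, μ ≠ 1 → |μ| ≤ c) : slem M ≤ c :=
  Real.sSup_le (fun _ ⟨μ, hμ, hμ1, hx⟩ => hx ▸ h μ hμ hμ1) hc

end Stochastic

namespace IsHermitian

variable {A : Matrix ι ι ℝ}

theorem dotProduct_self_eq_sum (hA : A.IsHermitian) (u : ι → ℝ) :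
    u ⬝ᵥ u = ∑ i, (⇑(hA.eigenvectorBasis i) ⬝ᵥ u) ^ 2 := by
  have h := hA.eigenvectorBasis.sum_inner_mul_inner (WithLp.toLp 2 u) (WithLp.toLp 2 u)
  simp only [EuclideanSpace.inner_eq_star_dotProduct, star_trivial] at h
  simp only [← h, sq, dotProduct_comm u]

theorem dotProduct_mulVec_eq_sum (hA : A.IsHermitian) (u : ι → ℝ) :
    u ⬝ᵥ A *ᵥ u = ∑ i, hA.eigenvalues i * (⇑(hA.eigenvectorBasis i) ⬝ᵥ u) ^ 2 := by
  have h := hA.eigenvectorBasis.sum_inner_mul_inner (WithLp.toLp 2 u) (WithLp.toLp 2 (A *ᵥ u))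
  simp only [EuclideanSpace.inner_eq_star_dotProduct, star_trivial] at h
  rw [dotProduct_comm, ← h]
  refine sum_congr rfl fun i _ => ?_
  rw [dotProduct_comm (A *ᵥ u), dotProduct_mulVec, ← mulVec_transpose,
    (isHermitian_iff_isSymm.mp hA).eq, hA.mulVec_eigenvectorBasis, smul_dotProduct, smul_eq_mul]
  ring

theorem sq_dotProduct_eigenvectorBasis_ne_zero (hA : A.IsHermitian) {u : ι → ℝ} (hu : u ≠ 0) :
    (fun i => (⇑(hA.eigenvectorBasis i) ⬝ᵥ u) ^ 2) ≠ 0 := by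
  intro h
  apply hu
  rw [← dotProduct_self_eq_zero, hA.dotProduct_self_eq_sum, h]
  simp

theorem exists_dotProduct_mulVec_le (hA : A.IsHermitian) {u : ι → ℝ} (hu : u ≠ 0) :
    ∃ i, ⇑(hA.eigenvectorBasis i) ⬝ᵥ u ≠ 0 ∧ u ⬝ᵥ A *ᵥ u ≤ hA.eigenvalues i * (u ⬝ᵥ u) := by
  obtain ⟨i, hi, hle⟩ := exists_ne_zero_sum_mul_le hA.eigenvalues _ (fun _ => sq_nonneg _)
    (hA.sq_dotProduct_eigenvectorBasis_ne_zero hu)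
  exact ⟨i, pow_ne_zero_iff two_ne_zero |>.mp hi,
    by rwa [hA.dotProduct_mulVec_eq_sum, hA.dotProduct_self_eq_sum]⟩

theorem exists_le_dotProduct_mulVec (hA : A.IsHermitian) {u : ι → ℝ} (hu : u ≠ 0) :
    ∃ i, hA.eigenvalues i * (u ⬝ᵥ u) ≤ u ⬝ᵥ A *ᵥ u := by
  obtain ⟨i, hle⟩ := exists_mul_sum_le hA.eigenvalues _ (fun _ => sq_nonneg _)
    (hA.sq_dotProduct_eigenvectorBasis_ne_zero hu)
  exact ⟨i, by rwa [hA.dotProduct_mulVec_eq_sum, hA.dotProduct_self_eq_sum]⟩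

end IsHermitian

section RandomWalk

variable {W : Matrix ι ι ℝ}

theorem randomWalk_mem_rowStochastic (hW : ∀ i j, 0 ≤ W i j) (hdeg : ∀ i, 0 < (W *ᵥ 1) i) :
    randomWalk W ∈ rowStochastic ℝ ι := by
  refine mem_rowStochastic_iff_sum.mpr ⟨fun i j => div_nonneg (hW i j) (hdeg i).le, fun i => ?_⟩
  simp only [randomWalk, of_apply, ← sum_div]
  rw [div_eq_one_iff_eq (hdeg i).ne']
  simp [mulVec, dotProduct]

theorem spectrum_normalizedAdj_subset (hdeg : ∀ i, 0 < (W *ᵥ 1) i) :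
    spectrum ℝ (normalizedAdj W) ⊆ spectrum ℝ (randomWalk W) := by
  intro θ hθ
  obtain ⟨v, hv0, hv⟩ := exists_mulVec_eq_smul_of_mem_spectrum hθ
  refine mem_spectrum_of_mulVec_eq_smul (fun h => hv0 ?_) (randomWalk_mulVec_div_sqrtDegree hdeg hv)
  ext i
  simpa [(sqrtDegree_pos hdeg i).ne'] using congrFun h i

theorem eq_smul_sqrtDegree (hW : ∀ i j, 0 ≤ W i j) (hdeg : ∀ i, 0 < (W *ᵥ 1) i)
    (hconn : ∀ i j, Relation.ReflTransGen (fun a b => 0 < W a b) i j) {v : ι → ℝ}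
    (hv : normalizedAdj W *ᵥ v = v) (i : ι) : v = (v i / sqrtDegree W i) • sqrtDegree W := by
  have hy := randomWalk_mulVec_div_sqrtDegree hdeg (θ := 1) (by rwa [one_smul])
  rw [one_smul] at hy
  have hconn' i j : Relation.ReflTransGen (fun a b => 0 < randomWalk W a b) i j :=
    Relation.ReflTransGen.mono (fun a b hab => div_pos hab (hdeg a)) _ _ (hconn i j)
  ext j
  have hij := eq_of_mulVec_eq_self (randomWalk_mem_rowStochastic hW hdeg) hconn' hy j i
  simp only [Pi.div_apply] at hij
  rw [Pi.smul_apply, smul_eq_mul, ← hij, div_mul_cancel₀ _ (sqrtDegree_pos hdeg j).ne']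

theorem eigenvalues_normalizedAdj_ne_one (hWs : W.IsSymm) (hW : ∀ i j, 0 ≤ W i j)
    (hdeg : ∀ i, 0 < (W *ᵥ 1) i) (hconn : ∀ i j, Relation.ReflTransGen (fun a b => 0 < W a b) i j)
    {u : ι → ℝ} (hu : sqrtDegree W ⬝ᵥ u = 0) {i : ι}
    (hi : ⇑((isHermitian_normalizedAdj hWs).eigenvectorBasis i) ⬝ᵥ u ≠ 0) :
    (isHermitian_normalizedAdj hWs).eigenvalues i ≠ 1 := by
  intro h1
  have hv := (isHermitian_normalizedAdj hWs).mulVec_eigenvectorBasis i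
  rw [h1, one_smul] at hv
  rw [eq_smul_sqrtDegree hW hdeg hconn hv i, smul_dotProduct, hu, smul_zero] at hi
  exact hi rfl

def laplacian (W : Matrix ι ι ℝ) : Matrix ι ι ℝ := diagonal (W *ᵥ 1) - W

def signlessLaplacian (W : Matrix ι ι ℝ) : Matrix ι ι ℝ := diagonal (W *ᵥ 1) + W

theorem dotProduct_diagonal_mulVec (v z : ι → ℝ) : z ⬝ᵥ diagonal v *ᵥ z = ∑ i, v i * z i ^ 2 :=
  sum_congr rfl fun i _ => by rw [mulVec_diagonal]; ring

theorem sqrtDegree_mul_dotProduct_self_sub_normalizedAdj (hdeg : ∀ i, 0 < (W *ᵥ 1) i)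
    (z : ι → ℝ) : (sqrtDegree W * z) ⬝ᵥ (sqrtDegree W * z) -
      (sqrtDegree W * z) ⬝ᵥ normalizedAdj W *ᵥ (sqrtDegree W * z) = z ⬝ᵥ laplacian W *ᵥ z := by
  rw [sqrtDegree_mul_dotProduct_self hdeg, sqrtDegree_mul_dotProduct_normalizedAdj hdeg, laplacian,
    sub_mulVec, dotProduct_sub, dotProduct_diagonal_mulVec]

theorem sqrtDegree_mul_dotProduct_self_add_normalizedAdj (hdeg : ∀ i, 0 < (W *ᵥ 1) i)
    (z : ι → ℝ) : (sqrtDegree W * z) ⬝ᵥ (sqrtDegree W * z) +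
      (sqrtDegree W * z) ⬝ᵥ normalizedAdj W *ᵥ (sqrtDegree W * z) =
        z ⬝ᵥ signlessLaplacian W *ᵥ z := by
  rw [sqrtDegree_mul_dotProduct_self hdeg, sqrtDegree_mul_dotProduct_normalizedAdj hdeg,
    signlessLaplacian, add_mulVec, dotProduct_add, dotProduct_diagonal_mulVec]

theorem laplacian_mulVec_one : laplacian W *ᵥ 1 = 0 := by
  ext i
  simp [laplacian, sub_mulVec, mulVec_diagonal]

theorem dotProduct_laplacian_mulVec_sub_const (hW : W.IsSymm) (z : ι → ℝ) (c : ℝ) :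
    (z - c • 1) ⬝ᵥ laplacian W *ᵥ (z - c • 1) = z ⬝ᵥ laplacian W *ᵥ z := by
  have hL1 : (1 : ι → ℝ) ⬝ᵥ laplacian W *ᵥ z = 0 := by
    rw [dotProduct_mulVec, ← mulVec_transpose, laplacian, transpose_sub, diagonal_transpose, hW.eq,
      ← laplacian, laplacian_mulVec_one, zero_dotProduct]
  simp only [mulVec_sub, mulVec_smul, laplacian_mulVec_one, smul_zero, sub_zero, sub_dotProduct,
    smul_dotProduct, hL1]

end RandomWalk

section LoopDeletion

variable {A : Matrix ι ι ℝ} {d : ℝ}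

theorem laplacian_sub_diagonal_diag : laplacian (A - diagonal A.diag) = laplacian A := by
  ext i j
  by_cases h : i = j <;> simp [laplacian, sub_mulVec, mulVec_diagonal, h]

theorem dotProduct_signlessLaplacian_sub_diagonal_diag_le (hdiag : ∀ i, 0 ≤ A i i)
    (x : ι → ℝ) :
    x ⬝ᵥ signlessLaplacian (A - diagonal A.diag) *ᵥ x ≤ x ⬝ᵥ signlessLaplacian A *ᵥ x := by
  have hQ : signlessLaplacian (A - diagonal A.diag) =
      signlessLaplacian A - diagonal fun i => 2 * A i i := by
    ext i j
    by_cases h : i = j <;> simp [signlessLaplacian, sub_mulVec, mulVec_diagonal, h]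
    ring
  rw [hQ, sub_mulVec, dotProduct_sub, sub_le_self_iff, dotProduct_diagonal_mulVec]
  exact sum_nonneg fun i _ => by have := hdiag i; positivity

theorem sub_diagonal_diag_mulVec_one (hrow : ∀ i, (A *ᵥ 1) i = d) (i : ι) :
    ((A - diagonal A.diag) *ᵥ 1) i = d - A i i := by
  simp [sub_mulVec, mulVec_diagonal, hrow]

theorem one_le_sub_diagonal_diag_mulVec_one (hrow : ∀ i, (A *ᵥ 1) i = d)
    (hdeg : ∀ i, 1 ≤ d - A i i) (i : ι) : 1 ≤ ((A - diagonal A.diag) *ᵥ 1) i :=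
  sub_diagonal_diag_mulVec_one hrow i ▸ hdeg i

theorem sub_diagonal_diag_mulVec_one_eq_sum_ne (i : ι) :
    ((A - diagonal A.diag) *ᵥ 1) i = ∑ k ∈ univ.filter (fun k => k ≠ i), A i k := by
  simp only [mulVec, dotProduct, sub_diagonal_diag_apply, sum_filter]
  exact sum_congr rfl fun k _ => by simp [eq_comm]

theorem diagonal_mulVec_one_mulVec (hrow : ∀ i, (A *ᵥ 1) i = d) (x : ι → ℝ) :
    diagonal (A *ᵥ 1) *ᵥ x = d • x := by
  ext i
  simp [mulVec_diagonal, hrow]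

theorem dotProduct_laplacian_mulVec_eq (hrow : ∀ i, (A *ᵥ 1) i = d) (hd : d ≠ 0) {x : ι → ℝ}
    {μ : ℝ} (hx : randomWalk A *ᵥ x = μ • x) :
    x ⬝ᵥ laplacian A *ᵥ x = d * (1 - μ) * (x ⬝ᵥ x) := by
  rw [laplacian, sub_mulVec, mulVec_eq_smul_of_randomWalk_mulVec_eq_smul hrow hd hx,
    diagonal_mulVec_one_mulVec hrow, dotProduct_sub, dotProduct_smul, dotProduct_smul,
    smul_eq_mul, smul_eq_mul]
  ring

theorem dotProduct_signlessLaplacian_mulVec_eq (hrow : ∀ i, (A *ᵥ 1) i = d) (hd : d ≠ 0)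
    {x : ι → ℝ} {μ : ℝ} (hx : randomWalk A *ᵥ x = μ • x) :
    x ⬝ᵥ signlessLaplacian A *ᵥ x = d * (1 + μ) * (x ⬝ᵥ x) := by
  rw [signlessLaplacian, add_mulVec, mulVec_eq_smul_of_randomWalk_mulVec_eq_smul hrow hd hx,
    diagonal_mulVec_one_mulVec hrow, dotProduct_add, dotProduct_smul, dotProduct_smul,
    smul_eq_mul, smul_eq_mul]
  ring

theorem exists_mem_spectrum_randomWalk_sub_diagonal_one_sub_le (hA : A.IsSymm)
    (hA0 : ∀ i j, 0 ≤ A i j) (hrow : ∀ i, (A *ᵥ 1) i = d) (hdeg : ∀ i, 1 ≤ d - A i i)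
    (hconn : ∀ i j, Relation.ReflTransGen (fun a b => 0 < (A - diagonal A.diag) a b) i j)
    {x : ι → ℝ} {μ : ℝ} (hx0 : x ≠ 0) (hx : randomWalk A *ᵥ x = μ • x) (hμ1 : μ ≠ 1)
    (hμ : μ ≤ 1) :
    ∃ θ ∈ spectrum ℝ (randomWalk (A - diagonal A.diag)), θ ≠ 1 ∧ 1 - θ ≤ d * (1 - μ) := by
  obtain ⟨i₀, -⟩ := Function.ne_iff.mp hx0
  have hd : 1 ≤ d := by linarith [hdeg i₀, hA0 i₀ i₀]
  set W := A - diagonal A.diag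
  have hWdeg := one_le_sub_diagonal_diag_mulVec_one hrow hdeg
  have hWdeg' i : 0 < (W *ᵥ 1) i := one_pos.trans_le (hWdeg i)
  have hWs : W.IsSymm := hA.sub (isSymm_diagonal _)
  have hN := isHermitian_normalizedAdj hWs
  have : Nonempty ι := ⟨i₀⟩
  obtain ⟨c, hc⟩ := exists_dotProduct_sqrtDegree_mul_sub_const_eq_zero hWdeg' x
  set u := sqrtDegree W * (x - c • 1)
  have hxu : x ⬝ᵥ x ≤ u ⬝ᵥ u :=
    (dotProduct_self_le_sub_const (sum_eq_zero_of_randomWalk_mulVec_eq_smul hA hrow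
      (by positivity) hx hμ1) c).trans (dotProduct_self_le_sqrtDegree_mul hWdeg _)
  have huu : 0 < u ⬝ᵥ u :=
    (by simpa using dotProduct_self_star_pos_iff.mpr hx0 : 0 < x ⬝ᵥ x).trans_le hxu
  obtain ⟨i, hi, hle⟩ := hN.exists_dotProduct_mulVec_le (u := u)
    fun h => huu.ne' (by rw [h, dotProduct_zero])
  refine ⟨_, spectrum_normalizedAdj_subset hWdeg' (hN.eigenvalues_mem_spectrum_real i),
    eigenvalues_normalizedAdj_ne_one hWs (sub_diagonal_diag_nonneg hA0) hWdeg' hconn hc hi, ?_⟩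
  -- loops do not change the Laplacian, and its quadratic form is invariant under constant shifts
  have hform : u ⬝ᵥ u - u ⬝ᵥ normalizedAdj W *ᵥ u = d * (1 - μ) * (x ⬝ᵥ x) := by
    rw [sqrtDegree_mul_dotProduct_self_sub_normalizedAdj hWdeg', laplacian_sub_diagonal_diag,
      dotProduct_laplacian_mulVec_sub_const hA,
      dotProduct_laplacian_mulVec_eq hrow (by positivity) hx]
  have : (1 - hN.eigenvalues i) * (u ⬝ᵥ u) ≤ d * (1 - μ) * (u ⬝ᵥ u) := by
    nlinarith [mul_le_mul_of_nonneg_left hxu (by nlinarith : 0 ≤ d * (1 - μ))]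
  exact le_of_mul_le_mul_right this huu

theorem exists_mem_spectrum_randomWalk_sub_diagonal_one_add_le (hA : A.IsSymm)
    (hA0 : ∀ i j, 0 ≤ A i j) (hrow : ∀ i, (A *ᵥ 1) i = d) (hdeg : ∀ i, 1 ≤ d - A i i)
    {x : ι → ℝ} {μ : ℝ} (hx0 : x ≠ 0) (hx : randomWalk A *ᵥ x = μ • x) (hμ : -1 ≤ μ) :
    ∃ θ ∈ spectrum ℝ (randomWalk (A - diagonal A.diag)), 1 + θ ≤ d * (1 + μ) := by
  obtain ⟨i₀, -⟩ := Function.ne_iff.mp hx0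
  have hd : 1 ≤ d := by linarith [hdeg i₀, hA0 i₀ i₀]
  set W := A - diagonal A.diag
  have hWdeg := one_le_sub_diagonal_diag_mulVec_one hrow hdeg
  have hWdeg' i : 0 < (W *ᵥ 1) i := one_pos.trans_le (hWdeg i)
  have hN := isHermitian_normalizedAdj (hA.sub (isSymm_diagonal A.diag))
  set u := sqrtDegree W * x
  have hxu : x ⬝ᵥ x ≤ u ⬝ᵥ u := dotProduct_self_le_sqrtDegree_mul hWdeg x
  have huu : 0 < u ⬝ᵥ u :=
    (by simpa using dotProduct_self_star_pos_iff.mpr hx0 : 0 < x ⬝ᵥ x).trans_le hxu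
  obtain ⟨i, hle⟩ := hN.exists_le_dotProduct_mulVec (u := u)
    fun h => huu.ne' (by rw [h, dotProduct_zero])
  refine ⟨_, spectrum_normalizedAdj_subset hWdeg' (hN.eigenvalues_mem_spectrum_real i), ?_⟩
  -- deleting loops can only decrease the signless Laplacian form
  have hform : u ⬝ᵥ u + u ⬝ᵥ normalizedAdj W *ᵥ u ≤ d * (1 + μ) * (x ⬝ᵥ x) := by
    rw [sqrtDegree_mul_dotProduct_self_add_normalizedAdj hWdeg',
      ← dotProduct_signlessLaplacian_mulVec_eq hrow (by positivity) hx]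
    exact dotProduct_signlessLaplacian_sub_diagonal_diag_le (fun i => hA0 i i) x
  have : (1 + hN.eigenvalues i) * (u ⬝ᵥ u) ≤ d * (1 + μ) * (u ⬝ᵥ u) := by
    nlinarith [mul_le_mul_of_nonneg_left hxu (by nlinarith : 0 ≤ d * (1 + μ))]
  exact le_of_mul_le_mul_right this huu

theorem one_sub_slem_randomWalk_sub_diagonal_le_of_mem_spectrum (hA : A.IsSymm)
    (hA0 : ∀ i j, 0 ≤ A i j) (hrow : ∀ i, (A *ᵥ 1) i = d) (hdeg : ∀ i, 1 ≤ d - A i i)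
    (hconn : ∀ i j, Relation.ReflTransGen (fun a b => 0 < (A - diagonal A.diag) a b) i j)
    {μ : ℝ} (hμ : μ ∈ spectrum ℝ (randomWalk A)) (hμ1 : μ ≠ 1) :
    1 - slem (randomWalk (A - diagonal A.diag)) ≤ d * (1 - |μ|) := by
  have hP := randomWalk_mem_rowStochastic hA0 fun i => by linarith [hrow i, hdeg i, hA0 i i]
  have hP' := randomWalk_mem_rowStochastic (sub_diagonal_diag_nonneg hA0) fun i =>
    one_pos.trans_le (one_le_sub_diagonal_diag_mulVec_one hrow hdeg i)
  obtain ⟨x, hx0, hx⟩ := exists_mulVec_eq_smul_of_mem_spectrum hμ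
  obtain ⟨hμlo, hμhi⟩ := abs_le.mp (abs_le_one_of_mem_spectrum hP hμ)
  rcases le_or_gt 0 μ with hμ0 | hμ0
  · obtain ⟨θ, hθ, hθ1, hle⟩ := exists_mem_spectrum_randomWalk_sub_diagonal_one_sub_le hA hA0
      hrow hdeg hconn hx0 hx hμ1 hμhi
    rw [abs_of_nonneg hμ0]
    linarith [abs_le_slem hP' hθ hθ1, le_abs_self θ]
  · obtain ⟨θ, hθ, hle⟩ := exists_mem_spectrum_randomWalk_sub_diagonal_one_add_le hA hA0
      hrow hdeg hx0 hx hμlo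
    rw [abs_of_neg hμ0]
    by_cases hθ1 : θ = 1
    · linarith [slem_nonneg (M := randomWalk (A - diagonal A.diag))]
    · linarith [abs_le_slem hP' hθ hθ1, neg_abs_le θ]

theorem one_sub_slem_randomWalk_sub_diagonal_le [Nonempty ι] (hA : A.IsSymm)
    (hA0 : ∀ i j, 0 ≤ A i j) (hrow : ∀ i, (A *ᵥ 1) i = d) (hdeg : ∀ i, 1 ≤ d - A i i)
    (hconn : ∀ i j, Relation.ReflTransGen (fun a b => 0 < (A - diagonal A.diag) a b) i j) :
    1 - slem (randomWalk (A - diagonal A.diag)) ≤ d * (1 - slem (randomWalk A)) := by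
  obtain ⟨i₀⟩ := ‹Nonempty ι›
  have hd : 0 < d := by linarith [hdeg i₀, hA0 i₀ i₀]
  set ρ' := slem (randomWalk (A - diagonal A.diag))
  have hρ' : 0 ≤ ρ' := slem_nonneg
  have hslem : slem (randomWalk A) ≤ 1 - (1 - ρ') / d := by
    refine slem_le ?_ fun μ hμ hμ1 => ?_
    · rw [sub_nonneg, div_le_one hd]
      linarith [hdeg i₀, hA0 i₀ i₀]
    · rw [le_sub_comm, div_le_iff₀' hd]
      linarith [one_sub_slem_randomWalk_sub_diagonal_le_of_mem_spectrum hA hA0 hrow hdeg hconn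
        hμ hμ1]
  have := mul_le_mul_of_nonneg_left hslem hd.le
  rw [mul_sub, mul_div_cancel₀ _ hd.ne'] at this
  linarith

end LoopDeletion

end Matrix

theorem stmt7_general (n : ℕ) (hn : 2 ≤ n) (d : ℕ)
    (Adj : Matrix (Fin n) (Fin n) ℕ) (hsym : ∀ i j, Adj i j = Adj j i)
    (hreg : ∀ i, ∑ j, Adj i j = d)
    (hconn : ∀ i j : Fin n, Relation.ReflTransGen (fun a b => a ≠ b ∧ 0 < Adj a b) i j)
    (S S' : Matrix (Fin n) (Fin n) ℝ)
    (hS : ∀ i j, S i j = (Adj i j : ℝ) / (d : ℝ))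
    (hS' : ∀ i j, S' i j = (if i = j then 0 else (Adj i j : ℝ)) /
      (∑ k ∈ Finset.univ.filter (fun k => k ≠ i), (Adj i k : ℝ)))
    (lam lam' : ℝ)
    (hlam : lam = sSup {x : ℝ | ∃ μ ∈ spectrum ℝ S, μ ≠ 1 ∧ x = |μ|})
    (hlam' : lam' = sSup {x : ℝ | ∃ μ ∈ spectrum ℝ S', μ ≠ 1 ∧ x = |μ|}) :
    1 - lam' ≤ (d : ℝ) * (1 - lam) := by
  have : Nonempty (Fin n) := ⟨⟨0, by omega⟩⟩
  set A : Matrix (Fin n) (Fin n) ℝ := Adj.map (↑)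
  have hrow i : (A *ᵥ 1) i = d := by simp [A, mulVec, dotProduct, ← Nat.cast_sum, hreg]
  have hS_eq : S = randomWalk A := by ext i j; simp [randomWalk, hS, hrow, A]
  have hS'_eq : S' = randomWalk (A - diagonal A.diag) := by
    ext i j
    rw [hS', randomWalk, of_apply, sub_diagonal_diag_apply, sub_diagonal_diag_mulVec_one_eq_sum_ne]
    simp [A]
  have hconn' i j : Relation.ReflTransGen (fun a b => 0 < (A - diagonal A.diag) a b) i j :=
    Relation.ReflTransGen.mono (fun a b ⟨hab, hpos⟩ => by
      simpa [sub_diagonal_diag_apply, hab, A] using hpos) _ _ (hconn i j)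
  have hdeg i : 1 ≤ (d : ℝ) - A i i := by
    obtain ⟨j, hji⟩ := Fintype.exists_ne_of_one_lt_card (by simp; omega) i
    obtain hij | ⟨k, ⟨hik, hk⟩, -⟩ := (hconn i j).cases_head
    · exact absurd hij.symm hji
    rw [← sub_diagonal_diag_mulVec_one hrow, sub_diagonal_diag_mulVec_one_eq_sum_ne]
    calc (1 : ℝ) ≤ A i k := by simpa [A, Nat.one_le_iff_ne_zero, pos_iff_ne_zero] using hk
      _ ≤ _ := single_le_sum (fun _ _ => by simp [A]) (by simpa using hik.symm)
  rw [hlam, hlam', hS_eq, hS'_eq]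
  exact one_sub_slem_randomWalk_sub_diagonal_le (IsSymm.ext fun i j => by simp [A, hsym])
    (fun i j => by simp [A]) hrow hdeg hconn'

/-- Let `G` be a connected `d`-regular graph (loops allowed) and `G'` the graph obtained by
deleting all loops.  If `λ` and `λ'` are the SLEMs of the simple walks on `G` and `G'`,
then `1 − λ' ≤ d (1 − λ)`. -/
theorem stmt7 (n : ℕ) (hn : 2 ≤ n) (d : ℕ) (hd : 0 < d)
    (Adj : Matrix (Fin n) (Fin n) ℕ) (hsym : ∀ i j, Adj i j = Adj j i)
    (hreg : ∀ i, ∑ j, Adj i j = d)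
    (hconn : ∀ i j : Fin n, Relation.ReflTransGen (fun a b => a ≠ b ∧ 0 < Adj a b) i j)
    (S S' : Matrix (Fin n) (Fin n) ℝ)
    (hS : ∀ i j, S i j = (Adj i j : ℝ) / (d : ℝ))
    (hS' : ∀ i j, S' i j = (if i = j then 0 else (Adj i j : ℝ)) /
      (∑ k ∈ Finset.univ.filter (fun k => k ≠ i), (Adj i k : ℝ)))
    (lam lam' : ℝ)
    (hlam : lam = sSup {x : ℝ | ∃ μ ∈ spectrum ℝ S, μ ≠ 1 ∧ x = |μ|})
    (hlam' : lam' = sSup {x : ℝ | ∃ μ ∈ spectrum ℝ S', μ ≠ 1 ∧ x = |μ|}) :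
    1 - lam' ≤ (d : ℝ) * (1 - lam) :=
  stmt7_general n hn d Adj hsym hreg hconn S S' hS hS' lam lam' hlam hlam'
end

section
/- For i ∈ ℕ, the path graph P_{i+1} on i+1 vertices has edge-expansion h(P_{i+1}) = 2/(i+1) if i is odd and 2/i if i is even (i ≥ 1). -/
/-!
A path is connected, so every nonempty proper vertex set `T` has at least one boundary edge, while
`#T ≤ ⌊n/2⌋`; the initial segment `{0, …, ⌊n/2⌋ - 1}` has exactly one. Hence
`h(P_n) = 1 / ⌊n/2⌋`.
-/

open Finset

namespace SimpleGraph

instance (n : ℕ) : DecidableRel (pathGraph n).Adj :=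
  fun _ _ => decidable_of_iff _ pathGraph_adj.symm

section Expansion

variable {V : Type*} [Fintype V] [DecidableEq V] (G : SimpleGraph V) [DecidableRel G.Adj]

/-- Each edge between `T` and its complement is recorded once, as the pair (inside, outside). -/
def edgeBoundary (T : Finset V) : Finset (V × V) :=
  univ.filter fun p => p.1 ∈ T ∧ p.2 ∉ T ∧ G.Adj p.1 p.2

/-- The edge-expansion of `G` is the infimum of this set. -/
def expansionRatios : Set ℝ :=
  {x | ∃ T : Finset V, T.Nonempty ∧ 2 * #T ≤ Fintype.card V ∧
    x = (#(G.edgeBoundary T) : ℝ) / #T}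

variable {G}

theorem Preconnected.edgeBoundary_nonempty (hG : G.Preconnected) {T : Finset V} {u v : V}
    (hu : u ∈ T) (hv : v ∉ T) : (G.edgeBoundary T).Nonempty := by
  obtain ⟨p⟩ := hG u v
  obtain ⟨d, -, hd₁, hd₂⟩ := p.exists_boundary_dart (T : Set V) hu hv
  exact ⟨(d.fst, d.snd), mem_filter.2 ⟨mem_univ _, hd₁, hd₂, d.adj⟩⟩

theorem Preconnected.one_div_half_card_le (hG : G.Preconnected) {x : ℝ}
    (hx : x ∈ G.expansionRatios) : 1 / ((Fintype.card V / 2 : ℕ) : ℝ) ≤ x := by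
  obtain ⟨T, ⟨u, hu⟩, hT, rfl⟩ := hx
  have hT₀ : 0 < #T := card_pos.2 ⟨u, hu⟩
  obtain ⟨v, hv⟩ : ∃ v, v ∉ T := by
    by_contra! hall
    have := card_le_card (fun v _ => hall v : (univ : Finset V) ⊆ T)
    rw [card_univ] at this
    omega
  have hboundary : (1 : ℝ) ≤ #(G.edgeBoundary T) := by
    exact_mod_cast (hG.edgeBoundary_nonempty hu hv).card_pos
  have hTle : (#T : ℝ) ≤ (Fintype.card V / 2 : ℕ) := by exact_mod_cast (by omega)
  calc 1 / ((Fintype.card V / 2 : ℕ) : ℝ)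
      ≤ 1 / #T := one_div_le_one_div_of_le (by positivity) hTle
    _ ≤ #(G.edgeBoundary T) / #T := div_le_div_of_nonneg_right hboundary (Nat.cast_nonneg _)

end Expansion

theorem card_edgeBoundary_pathGraph_initialSegment {n k : ℕ} (hk : 0 < k) (hkn : k < n) :
    #((pathGraph n).edgeBoundary (univ.filter fun j : Fin n => (j : ℕ) < k)) = 1 := by
  rw [card_eq_one]
  refine ⟨(⟨k - 1, by omega⟩, ⟨k, hkn⟩), ?_⟩
  ext p
  simp only [edgeBoundary, mem_filter, mem_univ, true_and, pathGraph_adj, mem_singleton,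
    Prod.ext_iff, Fin.ext_iff]
  omega

theorem sInf_expansionRatios_pathGraph {n : ℕ} (hn : 2 ≤ n) :
    sInf (pathGraph n).expansionRatios = 1 / ((n / 2 : ℕ) : ℝ) := by
  have hconn : (pathGraph n).Preconnected := pathGraph_preconnected n
  refine IsLeast.csInf_eq
    ⟨?_, fun x hx => by simpa only [Fintype.card_fin] using hconn.one_div_half_card_le hx⟩
  have hcard : #(univ.filter fun j : Fin n => (j : ℕ) < n / 2) = n / 2 := by
    rw [Fin.card_filter_val_lt]
    omega
  refine ⟨univ.filter fun j : Fin n => (j : ℕ) < n / 2,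
    ⟨⟨0, by omega⟩, mem_filter.2 ⟨mem_univ _, Nat.div_pos hn two_pos⟩⟩,
    by simp only [hcard, Fintype.card_fin]; omega, ?_⟩
  rw [card_edgeBoundary_pathGraph_initialSegment (by omega) (by omega), hcard, Nat.cast_one]

end SimpleGraph

theorem one_div_succ_div_two_eq (i : ℕ) :
    1 / (((i + 1) / 2 : ℕ) : ℝ) = if Odd i then 2 / ((i : ℝ) + 1) else 2 / (i : ℝ) := by
  split_ifs with hi
  · obtain ⟨k, rfl⟩ := hi
    rw [show (2 * k + 1 + 1) / 2 = k + 1 by omega]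
    push_cast
    rw [show (2 * k + 1 + 1 : ℝ) = 2 * (k + 1) by ring, div_mul_cancel_left₀ two_ne_zero,
      one_div]
  · obtain ⟨k, rfl⟩ := Nat.not_odd_iff_even.1 hi
    rw [show (k + k + 1) / 2 = k by omega]
    push_cast
    rw [← two_mul, div_mul_cancel_left₀ two_ne_zero, one_div]

/-- The edge-expansion of the path graph on `i+1` vertices is `2/(i+1)` if `i` is odd and
`2/i` if `i` is even, for `i ≥ 1`. -/
theorem stmt9 (i : ℕ) (hi : 1 ≤ i)
    (h : ℝ)
    (hh : h = sInf {x : ℝ | ∃ T : Finset (Fin (i + 1)), T.Nonempty ∧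
      2 * T.card ≤ i + 1 ∧
      x = ((Finset.univ.filter (fun p : Fin (i + 1) × Fin (i + 1) =>
          p.1 ∈ T ∧ p.2 ∉ T ∧ ((p.1 : ℕ) + 1 = (p.2 : ℕ) ∨ (p.2 : ℕ) + 1 = (p.1 : ℕ)))).card : ℝ)
        / (T.card : ℝ)}) :
    h = if Odd i then 2 / ((i : ℝ) + 1) else 2 / (i : ℝ) := by
  rw [hh, ← one_div_succ_div_two_eq, ← SimpleGraph.sInf_expansionRatios_pathGraph (by omega)]
  simp only [SimpleGraph.expansionRatios, SimpleGraph.edgeBoundary, SimpleGraph.pathGraph_adj,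
    Fintype.card_fin]
end

section
/- Let A ∈ ℤ^{m×d} with ker_ℤ(A) ∩ ℕ^d = {0}, 𝓜 a Markov basis for A, and (b_i) a sequence in ℕA. Suppose there exists r ∈ ℕ such that |𝓕_{A,b_i}| ∈ Ω(i^r) and |𝓜^{b_i}| ∈ O(i^r), where 𝓜^{b} = 𝓜(diam(𝓕_{A,b}(𝓜))) is the adaptation of the Markov basis by all ℤ-linear combinations with coefficient ℓ_1-norm at most the diameter. Then the sequence of fiber graphs (𝓕_{A,b_i}(𝓜^{b_i}))_i is an expander: the SLEM of the simple walk on 𝓕_{A,b_i}(𝓜^{b_i}) equals 1 − |𝓕_{A,b_i}|/|𝓜^{b_i}| (assuming 𝓜^{b_i} taken with signs so that the fiber graph is complete with loops), which is bounded away from 1 uniformly in i. -/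
open scoped Classical

/-- The fiber of `b` under `A`. -/
def fiberE (m d : ℕ) (A : Matrix (Fin m) (Fin d) ℤ) (b : Fin m → ℤ) : Set (Fin d → ℤ) :=
  {u | (∀ j, 0 ≤ u j) ∧ A.mulVec u = b}

/-- One step of the fiber walk on `F` using moves `±Mset`. -/
def stepRelE (d : ℕ) (F Mset : Set (Fin d → ℤ)) (x y : Fin d → ℤ) : Prop :=
  x ∈ F ∧ y ∈ F ∧ (y - x ∈ Mset ∨ x - y ∈ Mset)

/-- Graph distance in the fiber graph on `F` with moves `±Mset`. -/
noncomputable def walkDistE (d : ℕ) (F Mset : Set (Fin d → ℤ)) (u v : Fin d → ℤ) : ℕ :=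
  sInf {n : ℕ | ∃ f : ℕ → (Fin d → ℤ), f 0 = u ∧ f n = v ∧
    ∀ t < n, stepRelE d F Mset (f t) (f (t + 1))}

/-- Diameter of the fiber graph on `F` with moves `±Mset`. -/
noncomputable def walkDiamE (d : ℕ) (F Mset : Set (Fin d → ℤ)) : ℕ :=
  sSup {n : ℕ | ∃ u ∈ F, ∃ v ∈ F, n = walkDistE d F Mset u v}

/-- `𝓜(l)`: all `ℤ`-linear combinations of the moves with coefficient `ℓ¹`-norm at most `l`. -/
def Mpow (d k : ℕ) (mv : Fin k → (Fin d → ℤ)) (l : ℕ) : Set (Fin d → ℤ) :=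
  {v | ∃ lam : Fin k → ℤ, (∑ j, |lam j|) ≤ (l : ℤ) ∧ v = ∑ j, lam j • mv j}

/-- The transition operator of the simple walk on the fiber graph `F(pm)`. -/
noncomputable def walkOpE (d : ℕ) (F : Set (Fin d → ℤ)) (pm : Finset (Fin d → ℤ))
    (f : (Fin d → ℤ) → ℝ) (u : Fin d → ℤ) : ℝ :=
  (pm.card : ℝ)⁻¹ * ∑ mvv ∈ pm, (if u + mvv ∈ F then f (u + mvv) else f u)

/-- `μ` is an eigenvalue of the simple walk on the fiber graph. -/
def isEigenE (d : ℕ) (F : Set (Fin d → ℤ)) (pm : Finset (Fin d → ℤ)) (μ : ℝ) : Prop :=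
  ∃ f : (Fin d → ℤ) → ℝ, (∃ u ∈ F, f u ≠ 0) ∧ (∀ u, u ∉ F → f u = 0) ∧
    ∀ u ∈ F, walkOpE d F pm f u = μ * f u

/-- The second largest eigenvalue modulus of the simple walk on the fiber graph. -/
noncomputable def slemE (d : ℕ) (F : Set (Fin d → ℤ)) (pm : Finset (Fin d → ℤ)) : ℝ :=
  sSup {x : ℝ | ∃ μ : ℝ, isEigenE d F pm μ ∧ μ ≠ 1 ∧ x = |μ|}

/-!
Fibers are finite: they are antichains in `ℕ^d`, which is well quasi-ordered (Dickson).
Since `𝓜` connects the fiber, two fiber elements are joined by a walk of length at most the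
diameter, so their difference lies in `𝓜^b`. Hence the adapted fiber graph is complete with
loops, and the walk operator is `f ↦ |𝓜^b|⁻¹ (∑_𝓕 f + (|𝓜^b| - |𝓕|) f)`. An eigenvector for an
eigenvalue `μ ≠ 1` must have zero sum, which forces `μ = 1 - |𝓕|/|𝓜^b|`, and any zero-sum
function is such an eigenvector. The growth hypotheses bound `|𝓕_{A,b_i}|/|𝓜^{b_i}|` below by
`c₁/c₂` for large `i`, and the finitely many remaining ratios are positive.
-/

theorem fiberE_finite {m d : ℕ} {A : Matrix (Fin m) (Fin d) ℤ}
    (hker : ∀ u : Fin d → ℤ, A.mulVec u = 0 → (∀ j, 0 ≤ u j) → u = 0) (b : Fin m → ℤ) :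
    (fiberE m d A b).Finite := by
  set toNat : (Fin d → ℤ) → (Fin d → ℕ) := fun u j => (u j).toNat
  have eq_of_toNat_le :
      ∀ u ∈ fiberE m d A b, ∀ v ∈ fiberE m d A b, toNat u ≤ toNat v → u = v := by
    rintro u ⟨hu, rfl⟩ v ⟨hv, hAv⟩ huv
    have hnonneg : ∀ j, 0 ≤ (v - u) j := fun j => by
      have huvj : (u j).toNat ≤ (v j).toNat := huv j
      have := hu j
      have := hv j
      rw [Pi.sub_apply]
      omega
    exact (sub_eq_zero.mp (hker _ (by rw [Matrix.mulVec_sub, hAv, sub_self]) hnonneg)).symm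
  refine Set.Finite.of_finite_image (WellQuasiOrderedLE.finite_of_isAntichain ?_)
    fun u hu v hv h => eq_of_toNat_le u hu v hv h.le
  rintro _ ⟨u, hu, rfl⟩ _ ⟨v, hv, rfl⟩ hne hle
  exact hne (congrArg toNat (eq_of_toNat_le u hu v hv hle))

section Mpow

variable {d k : ℕ} {mv : Fin k → (Fin d → ℤ)}

theorem zero_mem_Mpow (l : ℕ) : (0 : Fin d → ℤ) ∈ Mpow d k mv l :=
  ⟨0, by simp, by simp⟩

theorem Mpow_zero : Mpow d k mv 0 = {0} := by
  refine Set.Subset.antisymm ?_ (Set.singleton_subset_iff.mpr (zero_mem_Mpow 0))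
  rintro _ ⟨lam, hlam, rfl⟩
  have hlam0 : lam = 0 := funext fun j => abs_nonpos_iff.mp <|
    (Finset.single_le_sum (fun j _ => abs_nonneg (lam j)) (Finset.mem_univ j)).trans
      (by exact_mod_cast hlam)
  simp [hlam0]

theorem Mpow_mono {l l' : ℕ} (h : l ≤ l') : Mpow d k mv l ⊆ Mpow d k mv l' := by
  rintro v ⟨lam, hlam, rfl⟩
  exact ⟨lam, hlam.trans (by exact_mod_cast h), rfl⟩

theorem add_mem_Mpow {l l' : ℕ} {v w : Fin d → ℤ} (hv : v ∈ Mpow d k mv l)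
    (hw : w ∈ Mpow d k mv l') : v + w ∈ Mpow d k mv (l + l') := by
  obtain ⟨lam, hlam, rfl⟩ := hv
  obtain ⟨lam', hlam', rfl⟩ := hw
  refine ⟨lam + lam', ?_, by simp [add_smul, Finset.sum_add_distrib]⟩
  calc ∑ j, |(lam + lam') j| ≤ ∑ j, (|lam j| + |lam' j|) :=
        Finset.sum_le_sum fun j _ => abs_add_le _ _
    _ ≤ ((l + l' : ℕ) : ℤ) := by rw [Finset.sum_add_distrib]; push_cast; omega

theorem neg_mem_Mpow {l : ℕ} {v : Fin d → ℤ} (hv : v ∈ Mpow d k mv l) :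
    -v ∈ Mpow d k mv l := by
  obtain ⟨lam, hlam, rfl⟩ := hv
  exact ⟨-lam, by simpa using hlam, by simp [neg_smul, Finset.sum_neg_distrib]⟩

theorem move_mem_Mpow_one (j : Fin k) : mv j ∈ Mpow d k mv 1 :=
  ⟨Pi.single j 1, by simp [Pi.single_apply, apply_ite], by simp [Pi.single_apply]⟩

end Mpow

theorem Relation.ReflTransGen.exists_nat_path {α : Type*} {r : α → α → Prop} {a b : α}
    (h : Relation.ReflTransGen r a b) :
    ∃ n, ∃ f : ℕ → α, f 0 = a ∧ f n = b ∧ ∀ t < n, r (f t) (f (t + 1)) := by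
  induction h with
  | refl => exact ⟨0, fun _ => a, rfl, rfl, by simp⟩
  | @tail c e _ hce ih =>
    obtain ⟨n, f, hf0, hfn, hf⟩ := ih
    refine ⟨n + 1, Function.update f (n + 1) e, by simp [hf0], by simp, fun t ht => ?_⟩
    rcases (Nat.lt_succ_iff_lt_or_eq.mp ht) with ht | rfl
    · rw [Function.update_of_ne (by omega), Function.update_of_ne (by omega)]
      exact hf t ht
    · simpa [hfn] using hce

section FiberGraph

variable {d : ℕ} {F M : Set (Fin d → ℤ)}

theorem sub_mem_Mpow_of_path {k : ℕ} {mv : Fin k → (Fin d → ℤ)} (n : ℕ) (f : ℕ → (Fin d → ℤ))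
    (hf : ∀ t < n, stepRelE d F (Set.range mv) (f t) (f (t + 1))) :
    f n - f 0 ∈ Mpow d k mv n := by
  induction n with
  | zero => simpa using zero_mem_Mpow 0
  | succ n ih =>
    have hstep : f (n + 1) - f n ∈ Mpow d k mv 1 := by
      obtain ⟨-, -, ⟨j, hj⟩ | ⟨j, hj⟩⟩ := hf n n.lt_succ_self
      · exact hj ▸ move_mem_Mpow_one j
      · rw [← neg_sub, ← hj]
        exact neg_mem_Mpow (move_mem_Mpow_one j)
    simpa using add_mem_Mpow (ih fun t ht => hf t (ht.trans n.lt_succ_self)) hstep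

theorem walkDistE_self (u : Fin d → ℤ) : walkDistE d F M u u = 0 :=
  Nat.sInf_eq_zero.mpr (Or.inl ⟨fun _ => u, rfl, rfl, by simp⟩)

theorem exists_path_walkDistE {u v : Fin d → ℤ}
    (h : Relation.ReflTransGen (stepRelE d F M) u v) :
    ∃ f : ℕ → (Fin d → ℤ), f 0 = u ∧ f (walkDistE d F M u v) = v ∧
      ∀ t < walkDistE d F M u v, stepRelE d F M (f t) (f (t + 1)) :=
  Nat.sInf_mem h.exists_nat_path

theorem walkDistE_le_walkDiamE (hF : F.Finite) {u v : Fin d → ℤ} (hu : u ∈ F) (hv : v ∈ F) :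
    walkDistE d F M u v ≤ walkDiamE d F M := by
  refine le_csSup ((hF.image2 (walkDistE d F M) hF).bddAbove.mono ?_) ⟨u, hu, v, hv, rfl⟩
  rintro _ ⟨u, hu, v, hv, rfl⟩
  exact ⟨u, hu, v, hv, rfl⟩

theorem walkDiamE_singleton (u : Fin d → ℤ) : walkDiamE d {u} M = 0 := by
  have : {n | ∃ u' ∈ ({u} : Set (Fin d → ℤ)), ∃ v ∈ ({u} : Set (Fin d → ℤ)),
      n = walkDistE d {u} M u' v} = {0} := by
    simp [walkDistE_self]
  rw [walkDiamE, this, csSup_singleton]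

theorem sub_mem_Mpow_walkDiamE {k : ℕ} {mv : Fin k → (Fin d → ℤ)} (hF : F.Finite)
    (hconn : ∀ u ∈ F, ∀ v ∈ F, Relation.ReflTransGen (stepRelE d F (Set.range mv)) u v)
    {u v : Fin d → ℤ} (hu : u ∈ F) (hv : v ∈ F) :
    v - u ∈ Mpow d k mv (walkDiamE d F (Set.range mv)) := by
  obtain ⟨f, hf0, hfn, hf⟩ := exists_path_walkDistE (hconn u hu v hv)
  have hpath := sub_mem_Mpow_of_path _ f hf
  rw [hf0, hfn] at hpath
  exact Mpow_mono (walkDistE_le_walkDiamE hF hu hv) hpath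

end FiberGraph

section Spectrum

variable {d : ℕ} {F : Set (Fin d → ℤ)} {pm : Finset (Fin d → ℤ)}

theorem ncard_le_card_of_sub_mem (hF : F.Nonempty) (hsub : ∀ u ∈ F, ∀ v ∈ F, v - u ∈ pm) :
    F.ncard ≤ pm.card := by
  obtain ⟨u, hu⟩ := hF
  rw [← Set.ncard_coe_finset]
  exact Set.ncard_le_ncard_of_injOn (· - u) (fun v hv => hsub u hu v hv)
    (sub_left_injective.injOn) pm.finite_toSet

theorem walkOpE_eq_of_sub_mem (hF : F.Finite) (hsub : ∀ u ∈ F, ∀ v ∈ F, v - u ∈ pm)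
    (f : (Fin d → ℤ) → ℝ) {u : Fin d → ℤ} (hu : u ∈ F) :
    walkOpE d F pm f u =
      (pm.card : ℝ)⁻¹ * (∑ v ∈ hF.toFinset, f v + ((pm.card : ℝ) - F.ncard) * f u) := by
  have hmap : (pm.filter (fun x => u + x ∈ F)).map (addLeftEmbedding u) = hF.toFinset := by
    ext v
    simp only [Finset.mem_map, Finset.mem_filter, addLeftEmbedding_apply, Set.Finite.mem_toFinset]
    refine ⟨?_, fun hv => ⟨v - u, ⟨hsub u hu v hv, by simpa using hv⟩, by abel⟩⟩
    rintro ⟨x, ⟨-, hx⟩, rfl⟩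
    exact hx
  have hcard : (pm.filter (fun x => u + x ∈ F)).card = F.ncard := by
    rw [Set.ncard_eq_toFinset_card F hF, ← hmap, Finset.card_map]
  have hcard_not : ((pm.filter (fun x => u + x ∉ F)).card : ℝ) = pm.card - F.ncard := by
    rw [← hcard, eq_sub_iff_add_eq, ← Nat.cast_add, add_comm,
      Finset.card_filter_add_card_filter_not]
  rw [walkOpE, Finset.sum_ite, Finset.sum_const, nsmul_eq_mul, hcard_not, ← hmap,
    Finset.sum_map]
  rfl

theorem isEigenE_iff_of_sub_mem (hF : F.Finite) (hsub : ∀ u ∈ F, ∀ v ∈ F, v - u ∈ pm)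
    (hF₂ : 1 < F.ncard) {μ : ℝ} (hμ : μ ≠ 1) :
    isEigenE d F pm μ ↔ μ = 1 - F.ncard / pm.card := by
  obtain ⟨u₁, hu₁, u₂, hu₂, hne⟩ := (Set.one_lt_ncard hF).mp hF₂
  have hN : (pm.card : ℝ) ≠ 0 := by
    exact_mod_cast (Finset.card_pos.mpr ⟨0, by simpa using hsub u₁ hu₁ u₁ hu₁⟩).ne'
  have hcoef : (pm.card : ℝ)⁻¹ * (pm.card - F.ncard) = 1 - F.ncard / pm.card := by
    field_simp
  constructor
  · rintro ⟨f, ⟨u, hu, hfu⟩, -, heig⟩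
    set S := ∑ v ∈ hF.toFinset, f v with hS_def
    have hop : ∀ w ∈ F, (pm.card : ℝ)⁻¹ * (S + (pm.card - F.ncard) * f w) = μ * f w :=
      fun w hw => (walkOpE_eq_of_sub_mem hF hsub f hw).symm.trans (heig w hw)
    -- summing the eigenvalue equation over the fiber gives `S = μ S`
    have hS : S = 0 := by
      have hsum := Finset.sum_congr rfl fun w hw => hop w (hF.mem_toFinset.mp hw)
      rw [← Finset.mul_sum, Finset.sum_add_distrib, Finset.sum_const, ← Finset.mul_sum,
        ← Finset.mul_sum, nsmul_eq_mul, ← Set.ncard_eq_toFinset_card F hF, ← hS_def] at hsum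
      have : (1 - μ) * S = 0 := by
        field_simp at hsum
        exact mul_left_cancel₀ hN (by linear_combination hsum)
      exact (mul_eq_zero.mp this).resolve_left (sub_ne_zero.mpr hμ.symm)
    have := hop u hu
    rw [hS, zero_add, ← mul_assoc, hcoef] at this
    exact (mul_right_cancel₀ hfu this).symm
  · rintro rfl
    refine ⟨Pi.single u₁ 1 - Pi.single u₂ 1, ⟨u₁, hu₁, by simp [hne]⟩, fun u hu => ?_,
      fun u hu => ?_⟩
    · simp [ne_of_mem_of_not_mem hu₁ hu, ne_of_mem_of_not_mem hu₂ hu]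
    · rw [walkOpE_eq_of_sub_mem hF hsub _ hu]
      simp only [Pi.sub_apply]
      rw [Finset.sum_sub_distrib, Finset.sum_pi_single', Finset.sum_pi_single']
      simp [hF.mem_toFinset.mpr hu₁, hF.mem_toFinset.mpr hu₂, ← hcoef]
      ring

theorem slemE_eq_of_sub_mem (hF : F.Finite) (hsub : ∀ u ∈ F, ∀ v ∈ F, v - u ∈ pm)
    (hF₂ : 1 < F.ncard) : slemE d F pm = 1 - F.ncard / pm.card := by
  have hF₀ : F.Nonempty := Set.nonempty_of_ncard_ne_zero (by omega)
  have hN : (0 : ℝ) < pm.card := by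
    exact_mod_cast (Set.ncard_pos hF).mpr hF₀ |>.trans_le (ncard_le_card_of_sub_mem hF₀ hsub)
  have hratio_pos : (0 : ℝ) < F.ncard / pm.card := div_pos (by exact_mod_cast (by omega)) hN
  have hratio_le : (F.ncard : ℝ) / pm.card ≤ 1 :=
    div_le_one_of_le₀ (by exact_mod_cast ncard_le_card_of_sub_mem hF₀ hsub) hN.le
  have hne : 1 - (F.ncard : ℝ) / pm.card ≠ 1 := by linarith
  have habs : |1 - (F.ncard : ℝ) / pm.card| = 1 - F.ncard / pm.card :=
    abs_of_nonneg (by linarith)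
  have : {x : ℝ | ∃ μ, isEigenE d F pm μ ∧ μ ≠ 1 ∧ x = |μ|} =
      {1 - (F.ncard : ℝ) / pm.card} := by
    ext x
    constructor
    · rintro ⟨μ, hμ, hμ₁, rfl⟩
      rw [(isEigenE_iff_of_sub_mem hF hsub hF₂ hμ₁).mp hμ, habs]
      exact Set.mem_singleton _
    · rintro rfl
      exact ⟨_, (isEigenE_iff_of_sub_mem hF hsub hF₂ hne).mpr rfl, hne, habs.symm⟩
  rw [slemE, this, csSup_singleton]

theorem slemE_singleton (u : Fin d → ℤ) (hpm : pm.Nonempty) : slemE d {u} pm = 0 := by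
  have : {x : ℝ | ∃ μ, isEigenE d {u} pm μ ∧ μ ≠ 1 ∧ x = |μ|} = ∅ := by
    refine Set.eq_empty_of_forall_notMem ?_
    rintro _ ⟨μ, ⟨f, ⟨v, hv, hfu⟩, -, heig⟩, hμ, -⟩
    rw [Set.mem_singleton_iff] at hv
    subst v
    -- on a one-point fiber every move either stays put or is rejected
    have hop : walkOpE d {u} pm f u = f u := by
      have hN : (pm.card : ℝ) ≠ 0 := by exact_mod_cast hpm.card_pos.ne'
      rw [walkOpE, Finset.sum_congr rfl fun x _ => ?_, Finset.sum_const, nsmul_eq_mul,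
        inv_mul_cancel_left₀ hN]
      split_ifs with hx
      · rw [Set.mem_singleton_iff.mp hx]
      · rfl
    exact hμ (mul_right_cancel₀ hfu (by rw [one_mul, ← heig u rfl, hop]))
  rw [slemE, this, Real.sSup_empty]

end Spectrum

theorem slemE_eq_of_reflTransGen {d k : ℕ} {mv : Fin k → (Fin d → ℤ)} {F : Set (Fin d → ℤ)}
    (hF : F.Finite) (hF₀ : F.Nonempty)
    (hconn : ∀ u ∈ F, ∀ v ∈ F, Relation.ReflTransGen (stepRelE d F (Set.range mv)) u v)
    {pm : Finset (Fin d → ℤ)}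
    (hpm : (pm : Set (Fin d → ℤ)) = Mpow d k mv (walkDiamE d F (Set.range mv))) :
    slemE d F pm = 1 - F.ncard / pm.card := by
  have hsub : ∀ u ∈ F, ∀ v ∈ F, v - u ∈ pm := fun u hu v hv => by
    rw [← Finset.mem_coe, hpm]
    exact sub_mem_Mpow_walkDiamE hF hconn hu hv
  rcases (Nat.one_le_iff_ne_zero.mpr ((Set.ncard_pos hF).mpr hF₀).ne').eq_or_lt with h₁ | hF₂
  · obtain ⟨u, rfl⟩ := Set.ncard_eq_one.mp h₁.symm
    have hpm₀ : pm = {0} := by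
      rw [← Finset.coe_inj, hpm, walkDiamE_singleton, Mpow_zero, Finset.coe_singleton]
    simp [hpm₀, slemE_singleton]
  · exact slemE_eq_of_sub_mem hF hsub hF₂

theorem exists_pos_forall_le_of_eventually_le {g : ℕ → ℝ} (hg : ∀ i, 0 < g i) {c : ℝ}
    (hc : 0 < c) (h : ∀ᶠ i in Filter.atTop, c ≤ g i) : ∃ ε, 0 < ε ∧ ∀ i, ε ≤ g i := by
  obtain ⟨n, hcg⟩ := Filter.eventually_atTop.mp h
  clear h
  induction n generalizing c with
  | zero => exact ⟨c, hc, fun i => hcg i i.zero_le⟩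
  | succ n ih =>
    refine ih (lt_min hc (hg n)) fun i hi => ?_
    rcases hi.eq_or_lt with rfl | hi
    · exact min_le_right _ _
    · exact (min_le_left _ _).trans (hcg i hi)

theorem stmt18_general (m d k : ℕ) (A : Matrix (Fin m) (Fin d) ℤ)
    (hker : ∀ u : Fin d → ℤ, A.mulVec u = 0 → (∀ j, 0 ≤ u j) → u = 0)
    (mv : Fin k → (Fin d → ℤ))
    (hMarkov : ∀ b : Fin m → ℤ, (fiberE m d A b).Nonempty →
      ∀ u ∈ fiberE m d A b, ∀ v ∈ fiberE m d A b,
        Relation.ReflTransGen (stepRelE d (fiberE m d A b) (Set.range mv)) u v)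
    (b : ℕ → Fin m → ℤ) (hb : ∀ i, (fiberE m d A (b i)).Nonempty)
    (Mad : ℕ → Finset (Fin d → ℤ))
    (hMad : ∀ i, (Mad i : Set (Fin d → ℤ)) =
      Mpow d k mv (walkDiamE d (fiberE m d A (b i)) (Set.range mv)))
    (r : ℕ)
    (c₁ : ℝ) (hc₁ : 0 < c₁) (i₁ : ℕ)
    (hΩ : ∀ i : ℕ, i₁ ≤ i → c₁ * (i : ℝ) ^ r ≤ ((fiberE m d A (b i)).ncard : ℝ))
    (c₂ : ℝ) (i₂ : ℕ)
    (hO : ∀ i : ℕ, i₂ ≤ i → ((Mad i).card : ℝ) ≤ c₂ * (i : ℝ) ^ r) :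
    (∀ i : ℕ, slemE d (fiberE m d A (b i)) (Mad i) =
      1 - ((fiberE m d A (b i)).ncard : ℝ) / ((Mad i).card : ℝ)) ∧
    ∃ ε : ℝ, 0 < ε ∧ ∀ i : ℕ, slemE d (fiberE m d A (b i)) (Mad i) ≤ 1 - ε := by
  have hslem : ∀ i, slemE d (fiberE m d A (b i)) (Mad i) =
      1 - ((fiberE m d A (b i)).ncard : ℝ) / ((Mad i).card : ℝ) := fun i =>
    slemE_eq_of_reflTransGen (fiberE_finite hker _) (hb i) (hMarkov _ (hb i)) (hMad i)
  have hN : ∀ i, (0 : ℝ) < (Mad i).card := fun i => by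
    exact_mod_cast Finset.card_pos.mpr ⟨0, by rw [← Finset.mem_coe, hMad]; exact zero_mem_Mpow _⟩
  have hn : ∀ i, (0 : ℝ) < (fiberE m d A (b i)).ncard := fun i => by
    exact_mod_cast (Set.ncard_pos (fiberE_finite hker _)).mpr (hb i)
  have hc₂ : 0 < c₂ :=
    pos_of_mul_pos_left ((hN i₂).trans_le (hO i₂ le_rfl)) (by positivity)
  have hratio : ∀ i, max (max i₁ i₂) 1 ≤ i →
      c₁ / c₂ ≤ ((fiberE m d A (b i)).ncard : ℝ) / (Mad i).card := by
    intro i hi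
    simp only [max_le_iff] at hi
    obtain ⟨⟨hi₁, hi₂⟩, hi₀⟩ := hi
    calc c₁ / c₂ = c₁ * (i : ℝ) ^ r / (c₂ * (i : ℝ) ^ r) :=
          (mul_div_mul_right _ _ (pow_pos (by exact_mod_cast hi₀) r).ne').symm
      _ ≤ _ := div_le_div₀ (hn i).le (hΩ i hi₁) (hN i) (hO i hi₂)
  obtain ⟨ε, hε, hεg⟩ := exists_pos_forall_le_of_eventually_le (fun i => div_pos (hn i) (hN i))
    (div_pos hc₁ hc₂) (Filter.eventually_atTop.mpr ⟨_, hratio⟩)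
  exact ⟨hslem, ε, hε, fun i => by linarith [hslem i, hεg i]⟩

/-- If `|𝓕_{A,b_i}| ∈ Ω(i^r)` and `|𝓜^{b_i}| ∈ O(i^r)`, where `𝓜^{b} = 𝓜(diam 𝓕_{A,b}(𝓜))`
is the adapted Markov basis, then the fiber graphs with adapted moves form an expander:
the SLEM equals `1 − |𝓕_{A,b_i}|/|𝓜^{b_i}|` and is uniformly bounded away from `1`. -/
theorem stmt18 (m d k : ℕ) (A : Matrix (Fin m) (Fin d) ℤ)
    (hker : ∀ u : Fin d → ℤ, A.mulVec u = 0 → (∀ j, 0 ≤ u j) → u = 0)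
    (mv : Fin k → (Fin d → ℤ)) (hmv : ∀ j, A.mulVec (mv j) = 0)
    (hMarkov : ∀ b : Fin m → ℤ, (fiberE m d A b).Nonempty →
      ∀ u ∈ fiberE m d A b, ∀ v ∈ fiberE m d A b,
        Relation.ReflTransGen (stepRelE d (fiberE m d A b) (Set.range mv)) u v)
    (b : ℕ → Fin m → ℤ) (hb : ∀ i, (fiberE m d A (b i)).Nonempty)
    (Mad : ℕ → Finset (Fin d → ℤ))
    (hMad : ∀ i, (Mad i : Set (Fin d → ℤ)) =
      Mpow d k mv (walkDiamE d (fiberE m d A (b i)) (Set.range mv)))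
    (r : ℕ)
    (c₁ : ℝ) (hc₁ : 0 < c₁) (i₁ : ℕ)
    (hΩ : ∀ i : ℕ, i₁ ≤ i → c₁ * (i : ℝ) ^ r ≤ ((fiberE m d A (b i)).ncard : ℝ))
    (c₂ : ℝ) (i₂ : ℕ)
    (hO : ∀ i : ℕ, i₂ ≤ i → ((Mad i).card : ℝ) ≤ c₂ * (i : ℝ) ^ r) :
    (∀ i : ℕ, slemE d (fiberE m d A (b i)) (Mad i) =
      1 - ((fiberE m d A (b i)).ncard : ℝ) / ((Mad i).card : ℝ)) ∧
    ∃ ε : ℝ, 0 < ε ∧ ∀ i : ℕ, slemE d (fiberE m d A (b i)) (Mad i) ≤ 1 - ε :=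
  stmt18_general m d k A hker mv hMarkov b hb Mad hMad r c₁ hc₁ i₁ hΩ c₂ i₂ hO
end
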